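/- arXiv:1504.00848 — 10 statements merged into one kernel-verified Lean document; each statement's English description precedes it below -/
import Mathlib

section
/- Let n and k be integers with 2 ≤ k and n > 2k, and let A = A_{n,k}. For any elements y₁, …, y_{2n−6} of the F₂-linear span of {R, V₁, …, V_{n−1}} in A (i.e., arbitrary degree-one classes), the product ∏_{i=1}^{2n−6} (y_i ⊗ 1 + 1 ⊗ y_i) equals 0 in A ⊗_{F₂} A. -/
open MvPolynomial
open scoped TensorProduct

noncomputable section

/-- The relations defining `A_{n,k}`: the polynomial ring is
`F₂[R, V₁, …, V_{n−1}]`, realized as `MvPolynomial (Option (Fin (n-1))) (ZMod 2)`,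
where `X none` plays the role of `R` and `X (some j)` plays the role of `V_{j+1}`. -/
def polygonRels (n k : ℕ) : Set (MvPolynomial (Option (Fin (n - 1))) (ZMod 2)) :=
  (Set.range fun i : Fin (n - 1) => X (some i) ^ 2 + X (some i) * X none) ∪
  ((fun S : Finset (Fin (n - 1)) => ∏ i ∈ S, X (some i)) '' {S | S.card = k}) ∪
  ((fun L : Finset (Fin (n - 1)) =>
      ∑ S ∈ L.powerset.filter (fun S => S.card ≤ k - 1),
        X none ^ (L.card - 1 - S.card) * ∏ i ∈ S, X (some i)) ''
    {L | n - k ≤ L.card ∧ L.card ≤ n - 2})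

/-- The ideal `I_{n,k}`. -/
def polygonIdeal (n k : ℕ) : Ideal (MvPolynomial (Option (Fin (n - 1))) (ZMod 2)) :=
  Ideal.span (polygonRels n k)

/-- The algebra `A_{n,k} ≅ H^*(M̄_{n,n-2k}; Z/2)`. -/
abbrev PolygonAlg (n k : ℕ) :=
  MvPolynomial (Option (Fin (n - 1))) (ZMod 2) ⧸ polygonIdeal n k

/-- The class `R` in `A_{n,k}`. -/
def Rcl (n k : ℕ) : PolygonAlg n k := Ideal.Quotient.mk _ (X none)

/-- The class `V_{i+1}` in `A_{n,k}` (so `Vcl n k j` is `V_{j+1}` in 1-based notation). -/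
def Vcl (n k : ℕ) (i : Fin (n - 1)) : PolygonAlg n k := Ideal.Quotient.mk _ (X (some i))

/-- The zero divisor `a ⊗ 1 + 1 ⊗ a` in `A_{n,k} ⊗_{F₂} A_{n,k}`. -/
def zd {n k : ℕ} (a : PolygonAlg n k) : PolygonAlg n k ⊗[ZMod 2] PolygonAlg n k :=
  a ⊗ₜ 1 + 1 ⊗ₜ a

end

/-! The monomials `R^a V_T` with `a + |T| = d` span the degree-`d` part of `A`, and `V_T = 0`
once `|T| ≥ k`. Multiplying relation (iii) by `R^c V_T` for `L` disjoint from `T` expresses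
`R^{d-|T|} V_T` through the monomials `R^{d-|T'|} V_{T'}` with `T ⊊ T'`, so a downward induction
on `|T|` shows that the degree-`(n-2)` part vanishes and that the degree-`(n-3)` part is spanned
by the classes `R^{n-k-2} V_T` with `|T| = k - 1`. These all coincide: for `|U| = k - 2` and
`j ∉ U`, relation (iii) with `L = Uᶜ \ {j}` writes `R^{n-k-2} V_{U ∪ {j}}` as an expression not
depending on `j`. So the degree-`(n-3)` part is spanned by one class `ω`.

Expanding the product of the `2n - 6` zero divisors gives `∑_t y_t ⊗ y_{tᶜ}`, where
`y_t = ∏_{i ∈ t} y_i`. A term survives only if `|t| = |tᶜ| = n - 3`, and is then a multiple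
`c_t c_{tᶜ} • ω ⊗ ω` equal to the term of `tᶜ ≠ t`; the two cancel in characteristic `2`. -/

theorem Finset.prod_eq_zero_of_card_le {ι M : Type*} [CommMonoidWithZero M] {y : ι → M} {m : ℕ}
    (hy : ∀ s : Finset ι, s.card = m → ∏ i ∈ s, y i = 0) {s : Finset ι} (hs : m ≤ s.card) :
    ∏ i ∈ s, y i = 0 := by
  classical
  obtain ⟨s₀, hs₀, hcard⟩ := Finset.exists_subset_card_eq hs
  rw [← Finset.prod_sdiff hs₀, hy s₀ hcard, mul_zero]

theorem prod_tmul_one_add_one_tmul_eq_zero {K A ι : Type*} [CommSemiring K] [CharP K 2]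
    [CommSemiring A] [Algebra K A] [Fintype ι] [DecidableEq ι] {y : ι → A} {m : ℕ} (ω : A)
    (hm : 0 < m) (hι : Fintype.card ι = 2 * m)
    (hvanish : ∀ s : Finset ι, s.card = m + 1 → ∏ i ∈ s, y i = 0)
    (hspan : ∀ s : Finset ι, s.card = m → ∏ i ∈ s, y i ∈ K ∙ ω) :
    ∏ i, (y i ⊗ₜ[K] (1 : A) + 1 ⊗ₜ y i) = 0 := by
  have hexpand : ∏ i, (y i ⊗ₜ[K] (1 : A) + 1 ⊗ₜ y i) =
      ∑ t : Finset ι, (∏ i ∈ t, y i) ⊗ₜ[K] (∏ i ∈ tᶜ, y i) := by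
    simp only [Fintype.prod_add, ← Algebra.TensorProduct.includeLeft_apply (S := K),
      ← Algebra.TensorProduct.includeRight_apply, ← map_prod]
    simp only [Algebra.TensorProduct.includeLeft_apply, Algebra.TensorProduct.includeRight_apply,
      Algebra.TensorProduct.tmul_mul_tmul, mul_one, one_mul]
  have hcard_compl (t : Finset ι) : tᶜ.card + t.card = 2 * m := by
    rw [Finset.card_compl_add_card, hι]
  have hoff (t : Finset ι) (ht : t.card ≠ m) : (∏ i ∈ t, y i) ⊗ₜ[K] (∏ i ∈ tᶜ, y i) = 0 := by
    have := hcard_compl t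
    rcases lt_or_gt_of_ne ht with hlt | hgt
    · rw [Finset.prod_eq_zero_of_card_le hvanish (s := tᶜ) (by omega), TensorProduct.tmul_zero]
    · rw [Finset.prod_eq_zero_of_card_le hvanish (s := t) hgt, TensorProduct.zero_tmul]
  have hsymm (t : Finset ι) : (∏ i ∈ tᶜ, y i) ⊗ₜ[K] (∏ i ∈ tᶜᶜ, y i) =
      (∏ i ∈ t, y i) ⊗ₜ[K] (∏ i ∈ tᶜ, y i) := by
    have := hcard_compl t
    by_cases ht : t.card = m
    · obtain ⟨a, ha⟩ := Submodule.mem_span_singleton.1 (hspan t ht)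
      obtain ⟨b, hb⟩ := Submodule.mem_span_singleton.1 (hspan tᶜ (by omega))
      rw [compl_compl, ← ha, ← hb, TensorProduct.smul_tmul_smul, TensorProduct.smul_tmul_smul,
        mul_comm]
    · rw [hoff t ht, hoff tᶜ (by omega)]
  rw [hexpand]
  refine Finset.sum_ninvolution (fun t => tᶜ) (fun t => ?_) (fun t _ => ?_)
    (fun _ => Finset.mem_univ _) compl_compl
  · rw [hsymm, ← two_smul K, CharTwo.two_eq_zero, zero_smul]
  · have : Nonempty ι := Fintype.card_pos_iff.1 (by omega)
    exact compl_ne_self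

noncomputable section

namespace PolygonAlg

variable (n k : ℕ)

def vProd (T : Finset (Fin (n - 1))) : PolygonAlg n k := ∏ i ∈ T, Vcl n k i

def rvMonomial (a : ℕ) (T : Finset (Fin (n - 1))) : PolygonAlg n k := Rcl n k ^ a * vProd n k T

def degreeSpan (d : ℕ) : Submodule (ZMod 2) (PolygonAlg n k) :=
  Submodule.span (ZMod 2) {x | ∃ a T, a + T.card = d ∧ rvMonomial n k a T = x}

variable {n k}

theorem mk_eq_zero_of_mem_polygonRels {p : MvPolynomial (Option (Fin (n - 1))) (ZMod 2)}
    (hp : p ∈ polygonRels n k) : Ideal.Quotient.mk (polygonIdeal n k) p = 0 :=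
  Ideal.Quotient.eq_zero_iff_mem.2 (Ideal.subset_span hp)

theorem Vcl_sq (i : Fin (n - 1)) : Vcl n k i ^ 2 = -(Vcl n k i * Rcl n k) := by
  have h := mk_eq_zero_of_mem_polygonRels (k := k) (Or.inl (Or.inl ⟨i, rfl⟩))
  rw [map_add, map_pow, map_mul] at h
  exact eq_neg_of_add_eq_zero_left h

theorem vProd_eq_zero {T : Finset (Fin (n - 1))} (hT : k ≤ T.card) : vProd n k T = 0 := by
  obtain ⟨S, hST, hS⟩ := Finset.exists_subset_card_eq hT
  have hS0 := mk_eq_zero_of_mem_polygonRels (k := k) (Or.inl (Or.inr ⟨S, hS, rfl⟩))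
  rw [map_prod] at hS0
  rw [vProd, ← Finset.prod_sdiff hST]
  exact mul_eq_zero_of_right _ hS0

theorem rvMonomial_eq_zero {T : Finset (Fin (n - 1))} (hT : k ≤ T.card) (a : ℕ) :
    rvMonomial n k a T = 0 := by
  rw [rvMonomial, vProd_eq_zero hT, mul_zero]

theorem rvMonomial_mul_rvMonomial {T S : Finset (Fin (n - 1))} (h : Disjoint T S) (a b : ℕ) :
    rvMonomial n k a T * rvMonomial n k b S = rvMonomial n k (a + b) (T ∪ S) := by
  rw [rvMonomial, rvMonomial, rvMonomial, vProd, vProd, vProd, Finset.prod_union h, pow_add]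
  ring

theorem sum_powerset_rvMonomial_eq_zero {L : Finset (Fin (n - 1))} (hL₁ : n - k ≤ L.card)
    (hL₂ : L.card ≤ n - 2) :
    ∑ S ∈ L.powerset, rvMonomial n k (L.card - 1 - S.card) S = 0 := by
  have h := mk_eq_zero_of_mem_polygonRels (Or.inr ⟨L, ⟨hL₁, hL₂⟩, rfl⟩)
  -- relation (iii) restricts to `S.card ≤ k - 1`; the other terms vanish by (ii)
  simp only [map_sum, map_mul, map_pow, map_prod] at h
  rw [← Finset.sum_filter_of_ne (p := fun S => S.card ≤ k - 1) fun S _ hS => ?_]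
  · exact h
  · by_contra hSk
    exact hS (rvMonomial_eq_zero (by omega) _)

theorem sum_powerset_rvMonomial_union_eq_zero {T L : Finset (Fin (n - 1))} (hTL : Disjoint T L)
    (hL₁ : n - k ≤ L.card) (hL₂ : L.card ≤ n - 2) (c : ℕ) :
    ∑ S ∈ L.powerset, rvMonomial n k (c + (L.card - 1 - S.card)) (T ∪ S) = 0 := by
  rw [← mul_zero (rvMonomial n k c T), ← sum_powerset_rvMonomial_eq_zero hL₁ hL₂, Finset.mul_sum]
  refine Finset.sum_congr rfl fun S hS => ?_
  rw [rvMonomial_mul_rvMonomial (hTL.mono_right (Finset.mem_powerset.1 hS))]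

theorem rvMonomial_mem_of_forall_union_mem (N : Submodule (ZMod 2) (PolygonAlg n k))
    {T L : Finset (Fin (n - 1))} (hTL : Disjoint T L) (hL₁ : n - k ≤ L.card)
    (hL₂ : L.card ≤ n - 2) (c : ℕ)
    (h : ∀ S ∈ L.powerset.erase ∅, rvMonomial n k (c + (L.card - 1 - S.card)) (T ∪ S) ∈ N) :
    rvMonomial n k (c + (L.card - 1)) T ∈ N := by
  have hrel := sum_powerset_rvMonomial_union_eq_zero hTL hL₁ hL₂ c
  rw [← Finset.add_sum_erase _ _ (Finset.empty_mem_powerset L), Finset.card_empty,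
    Nat.sub_zero, Finset.union_empty] at hrel
  rw [eq_neg_of_add_eq_zero_left hrel]
  exact neg_mem (Submodule.sum_mem N h)

theorem rvMonomial_mem_of_forall_ssuperset_mem (hk : 2 ≤ k) (hnk : 2 * k < n) {d : ℕ}
    (hd : d ≤ n - 2) (N : Submodule (ZMod 2) (PolygonAlg n k)) {T : Finset (Fin (n - 1))}
    (hT : n - k + T.card ≤ d + 1)
    (h : ∀ T', T ⊂ T' → T'.card < k → rvMonomial n k (d - T'.card) T' ∈ N) :
    rvMonomial n k (d - T.card) T ∈ N := by
  -- `d + 1 - T.card` is too large for relation (iii) only when `T = ∅` and `d = n - 2`; then the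
  -- relation for `L.card = n - 2` is multiplied by one more factor `R`
  set ℓ := min (d + 1 - T.card) (n - 2)
  obtain ⟨L, hLT, hL⟩ := Finset.exists_subset_card_eq (s := Tᶜ)
    (by rw [Finset.card_compl, Fintype.card_fin]; omega : ℓ ≤ Tᶜ.card)
  have hTL : Disjoint T L := Finset.disjoint_of_subset_right hLT disjoint_compl_right
  have key := rvMonomial_mem_of_forall_union_mem N hTL (by omega) (by omega) (d + 1 - T.card - ℓ)
    fun S hS => ?_
  · rwa [show d + 1 - T.card - ℓ + (L.card - 1) = d - T.card by omega] at key
  obtain ⟨hS, hSL⟩ : S ≠ ∅ ∧ S ⊆ L := by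
    simpa only [Finset.mem_erase, Finset.mem_powerset] using hS
  have hTS := Finset.card_union_of_disjoint (hTL.mono_right hSL)
  have hS₀ := Finset.card_pos.2 (Finset.nonempty_iff_ne_empty.2 hS)
  have hSL' := Finset.card_le_card hSL
  by_cases hk' : k ≤ (T ∪ S).card
  · rw [rvMonomial_eq_zero hk']
    exact N.zero_mem
  · rw [show d + 1 - T.card - ℓ + (L.card - 1 - S.card) = d - (T ∪ S).card by omega]
    exact h _ (Finset.ssubset_iff_subset_ne.2 ⟨Finset.subset_union_left, fun hT' => by
      rw [← hT'] at hTS; omega⟩) (by omega)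

theorem rvMonomial_sub_card_eq_zero (hk : 2 ≤ k) (hnk : 2 * k < n) {T : Finset (Fin (n - 1))}
    (hT : T.card ≤ k - 1) : rvMonomial n k (n - 2 - T.card) T = 0 := by
  rw [← Submodule.mem_bot (ZMod 2)]
  refine Finset.strongDownwardInduction (p := fun T => rvMonomial n k (n - 2 - T.card) T ∈ ⊥)
    (fun T ih hT => ?_) T hT
  exact rvMonomial_mem_of_forall_ssuperset_mem hk hnk le_rfl ⊥ (by omega)
    fun T' hTT' hT' => ih (by omega) hTT'

theorem rvMonomial_insert_eq (hk : 2 ≤ k) (hnk : 2 * k < n) {U : Finset (Fin (n - 1))}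
    (hU : U.card = k - 2) {j : Fin (n - 1)} (hj : j ∉ U) :
    rvMonomial n k (n - k - 2) (insert j U) =
      rvMonomial n k (n - k - 1) U + ∑ i ∈ Uᶜ, rvMonomial n k (n - k - 2) (insert i U) := by
  have hjU : j ∈ Uᶜ := Finset.mem_compl.2 hj
  have hL : (Uᶜ.erase j).card = n - k := by
    rw [Finset.card_erase_of_mem hjU, Finset.card_compl, Fintype.card_fin, hU]
    omega
  have hrel := sum_powerset_rvMonomial_union_eq_zero (k := k)
    (Finset.disjoint_of_subset_right (Finset.erase_subset j Uᶜ) disjoint_compl_right)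
    (by omega) (by omega) 0
  rw [Finset.sum_powerset, ← Finset.sum_subset
    (Finset.range_subset_range.2 (by omega : 2 ≤ (Uᶜ.erase j).card + 1)) fun m _ hm => Finset.sum_eq_zero fun S hS => rvMonomial_eq_zero ?_ _] at hrel
  · simp only [Finset.sum_range_succ, Finset.powersetCard_zero,
      Finset.sum_singleton, Finset.powersetCard_one, Finset.sum_map, Function.Embedding.coeFn_mk,
      Finset.card_empty, Finset.card_singleton, Finset.union_empty, zero_add, hL] at hrel
    rw [← Finset.add_sum_erase _ _ hjU]
    simp only [Finset.union_comm U, ← Finset.insert_eq] at hrel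
    rw [show n - k - 1 - 0 = n - k - 1 by omega, show n - k - 1 - 1 = n - k - 2 by omega] at hrel
    linear_combination -hrel
  · obtain ⟨hSL, hS⟩ := Finset.mem_powersetCard.1 hS
    rw [Finset.card_union_of_disjoint (Finset.disjoint_of_subset_right
      (hSL.trans (Finset.erase_subset j Uᶜ)) disjoint_compl_right)]
    simp only [Finset.mem_range] at hm
    omega

theorem rvMonomial_eq_of_card_eq (hk : 2 ≤ k) (hnk : 2 * k < n) {T T' : Finset (Fin (n - 1))}
    (hT : T.card = k - 1) (hT' : T'.card = k - 1) :
    rvMonomial n k (n - k - 2) T = rvMonomial n k (n - k - 2) T' := by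
  induction hd : (T \ T').card generalizing T with
  | zero =>
    rw [Finset.eq_of_subset_of_card_le
      (Finset.sdiff_eq_empty_iff_subset.1 (Finset.card_eq_zero.1 hd)) (by omega)]
  | succ d ih =>
    obtain ⟨i, hi⟩ := Finset.card_pos.1 (by omega : 0 < (T \ T').card)
    obtain ⟨hiT, hiT'⟩ := Finset.mem_sdiff.1 hi
    obtain ⟨j, hjT', hjT⟩ := Finset.not_subset.1 fun hT'T : T' ⊆ T => by
      rw [Finset.eq_of_subset_of_card_le hT'T (by omega), Finset.sdiff_self,
        Finset.card_empty] at hd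
      omega
    have hU : (T.erase i).card = k - 2 := by rw [Finset.card_erase_of_mem hiT]; omega
    have hjU : j ∉ T.erase i := fun h => hjT (Finset.mem_of_mem_erase h)
    calc rvMonomial n k (n - k - 2) T
        = rvMonomial n k (n - k - 2) (insert i (T.erase i)) := by rw [Finset.insert_erase hiT]
      _ = rvMonomial n k (n - k - 2) (insert j (T.erase i)) := by
        rw [rvMonomial_insert_eq hk hnk hU (Finset.notMem_erase i T),
          rvMonomial_insert_eq hk hnk hU hjU]
      _ = rvMonomial n k (n - k - 2) T' := by
        refine ih (by rw [Finset.card_insert_of_notMem hjU]; omega) ?_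
        rw [Finset.insert_sdiff_of_mem _ hjT', Finset.erase_sdiff_comm,
          Finset.card_erase_of_mem hi, hd, Nat.add_sub_cancel]

theorem rvMonomial_mem_span_singleton (hk : 2 ≤ k) (hnk : 2 * k < n)
    {T₀ T : Finset (Fin (n - 1))} (hT₀ : T₀.card = k - 1) (hT : T.card ≤ k - 1) :
    rvMonomial n k (n - 3 - T.card) T ∈ (ZMod 2) ∙ rvMonomial n k (n - k - 2) T₀ := by
  refine Finset.strongDownwardInduction
    (p := fun T => rvMonomial n k (n - 3 - T.card) T ∈ (ZMod 2) ∙ rvMonomial n k (n - k - 2) T₀)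
    (fun T ih hT => ?_) T hT
  by_cases hTk : T.card = k - 1
  · rw [show n - 3 - T.card = n - k - 2 by omega, rvMonomial_eq_of_card_eq hk hnk hTk hT₀]
    exact Submodule.mem_span_singleton_self _
  · exact rvMonomial_mem_of_forall_ssuperset_mem hk hnk (by omega) _ (by omega)
      fun T' hTT' hT' => ih (by omega) hTT'

theorem rvMonomial_mem_degreeSpan {a d : ℕ} {T : Finset (Fin (n - 1))} (h : a + T.card = d) :
    rvMonomial n k a T ∈ degreeSpan n k d :=
  Submodule.subset_span ⟨a, T, h, rfl⟩

theorem Vcl_mul_rvMonomial_mem (i : Fin (n - 1)) (a : ℕ) (T : Finset (Fin (n - 1))) :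
    Vcl n k i * rvMonomial n k a T ∈ degreeSpan n k (a + T.card + 1) := by
  by_cases hi : i ∈ T
  · have h : Vcl n k i * rvMonomial n k a T = -rvMonomial n k (a + 1) T := by
      rw [rvMonomial, rvMonomial, vProd, ← Finset.mul_prod_erase T _ hi]
      linear_combination (Rcl n k ^ a * ∏ j ∈ T.erase i, Vcl n k j) * Vcl_sq i
    rw [h]
    exact neg_mem (rvMonomial_mem_degreeSpan (by omega))
  · have h : Vcl n k i * rvMonomial n k a T = rvMonomial n k a (insert i T) := by
      rw [rvMonomial, rvMonomial, vProd, vProd, Finset.prod_insert hi]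
      ring
    rw [h]
    exact rvMonomial_mem_degreeSpan (by rw [Finset.card_insert_of_notMem hi]; omega)

theorem mul_mem_degreeSpan_succ {x z : PolygonAlg n k}
    (hx : x ∈ Submodule.span (ZMod 2) ({Rcl n k} ∪ Set.range (Vcl n k))) {d : ℕ}
    (hz : z ∈ degreeSpan n k d) : x * z ∈ degreeSpan n k (d + 1) := by
  suffices h : Submodule.span (ZMod 2) ({Rcl n k} ∪ Set.range (Vcl n k)) * degreeSpan n k d ≤
      degreeSpan n k (d + 1) from h (Submodule.mul_mem_mul hx hz)
  rw [degreeSpan, Submodule.span_mul_span, Submodule.span_le]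
  rintro _ ⟨g, hg, _, ⟨a, T, rfl, rfl⟩, rfl⟩
  dsimp only
  rcases hg with rfl | ⟨i, rfl⟩
  · have h : Rcl n k * rvMonomial n k a T = rvMonomial n k (a + 1) T := by
      rw [rvMonomial, rvMonomial, pow_succ]
      ring
    rw [h]
    exact rvMonomial_mem_degreeSpan (by omega)
  · exact Vcl_mul_rvMonomial_mem i a T

theorem prod_mem_degreeSpan {ι : Type*} (s : Finset ι) (y : ι → PolygonAlg n k)
    (hy : ∀ i ∈ s, y i ∈ Submodule.span (ZMod 2) ({Rcl n k} ∪ Set.range (Vcl n k))) :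
    ∏ i ∈ s, y i ∈ degreeSpan n k s.card := by
  induction s using Finset.cons_induction with
  | empty =>
    simpa [rvMonomial, vProd] using rvMonomial_mem_degreeSpan (n := n) (k := k) (a := 0)
      (T := ∅) rfl
  | cons a s ha ih =>
    rw [Finset.prod_cons, Finset.card_cons]
    exact mul_mem_degreeSpan_succ (hy a (Finset.mem_cons_self a s))
      (ih fun i hi => hy i (Finset.mem_cons_of_mem hi))

theorem degreeSpan_sub_two_eq_bot (hk : 2 ≤ k) (hnk : 2 * k < n) :
    degreeSpan n k (n - 2) = ⊥ := by
  rw [eq_bot_iff, degreeSpan, Submodule.span_le]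
  rintro _ ⟨a, T, hd, rfl⟩
  rw [SetLike.mem_coe, Submodule.mem_bot]
  by_cases hT : k ≤ T.card
  · exact rvMonomial_eq_zero hT a
  · obtain rfl : a = n - 2 - T.card := by omega
    exact rvMonomial_sub_card_eq_zero hk hnk (by omega)

theorem degreeSpan_sub_three_le_span_singleton (hk : 2 ≤ k) (hnk : 2 * k < n)
    {T₀ : Finset (Fin (n - 1))} (hT₀ : T₀.card = k - 1) :
    degreeSpan n k (n - 3) ≤ (ZMod 2) ∙ rvMonomial n k (n - k - 2) T₀ := by
  rw [degreeSpan, Submodule.span_le]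
  rintro _ ⟨a, T, hd, rfl⟩
  by_cases hT : k ≤ T.card
  · rw [SetLike.mem_coe, rvMonomial_eq_zero hT a]
    exact Submodule.zero_mem _
  · obtain rfl : a = n - 3 - T.card := by omega
    exact rvMonomial_mem_span_singleton hk hnk hT₀ (by omega)

end PolygonAlg

end

open PolygonAlg in
/-- For any `2n - 6` degree-one classes `y_i` (elements of the `F₂`-span of
`{R, V₁, …, V_{n−1}}`) in `A = A_{n,k}`, the product of the zero divisors
`y_i ⊗ 1 + 1 ⊗ y_i` vanishes in `A ⊗_{F₂} A`. -/
theorem prod_zero_divisors_eq_zero (n k : ℕ) (hk : 2 ≤ k) (hnk : 2 * k < n)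
    (y : Fin (2 * n - 6) → PolygonAlg n k)
    (hy : ∀ i, y i ∈ Submodule.span (ZMod 2) ({Rcl n k} ∪ Set.range (Vcl n k))) :
    ∏ i, ((y i) ⊗ₜ[ZMod 2] (1 : PolygonAlg n k) + (1 : PolygonAlg n k) ⊗ₜ[ZMod 2] (y i)) = 0 := by
  obtain ⟨T₀, -, hT₀⟩ := Finset.exists_subset_card_eq
    (show k - 1 ≤ (Finset.univ : Finset (Fin (n - 1))).card by
      rw [Finset.card_univ, Fintype.card_fin]; omega)
  refine prod_tmul_one_add_one_tmul_eq_zero (m := n - 3) (rvMonomial n k (n - k - 2) T₀)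
    (by omega) (by rw [Fintype.card_fin]; omega) (fun s hs => ?_) (fun s hs => ?_)
  · have h := prod_mem_degreeSpan s y fun i _ => hy i
    rwa [hs, show n - 3 + 1 = n - 2 by omega, degreeSpan_sub_two_eq_bot hk hnk,
      Submodule.mem_bot] at h
  · exact degreeSpan_sub_three_le_span_singleton hk hnk hT₀
      (hs ▸ prod_mem_degreeSpan s y fun i _ => hy i)
end

section
/- Let n and k be integers with 2 ≤ k and n > 2k, and let A = A_{n,k}. There exists an F₂-linear map φ₂ from the homogeneous degree-(n−4) component of A to F₂ such that for every subset S ⊆ {1,…,n−1} with |S| ≤ min(k−1, n−4), φ₂ sends the class of the monomial R^{n−4−|S|}·∏_{i∈S} V_i to the residue of the binomial coefficient C(n−2−|S|, k−1−|S|) modulo 2. -/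
open MvPolynomial
open scoped TensorProduct

/-- The degree-`d` homogeneous component of the graded algebra `A_{n,k}`
(all generators `R, Vᵢ` have degree 1): the image in the quotient of the
submodule of homogeneous polynomials of degree `d`. -/
noncomputable def homComponent (n k d : ℕ) : Submodule (ZMod 2) (PolygonAlg n k) :=
  (MvPolynomial.homogeneousSubmodule (Option (Fin (n - 1))) (ZMod 2) d).map
    (Ideal.Quotient.mkₐ (ZMod 2) (polygonIdeal n k)).toLinearMap

/-!
Let `φ₂` send a monomial of degree `n - 4` divisible by exactly the `V_i` with `i ∈ T` to
`w(T) = C(n-2-|T|, k-1-|T|) mod 2` (and `w(T) = 0` if `|T| ≥ k`), and every other monomial to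
`0`; this is the value forced by `V_i² = V_i R`. It kills every monomial multiple of the
relations: for `V_i² + V_i R` both terms have the same degree and the same `V`-support; for
`∏_{i ∈ S} V_i` with `|S| = k` the `V`-support is too large; for the relation indexed by `L`,
multiplied by a monomial with `V`-support `T`, one must show `∑_{S ⊆ L} w(S ∪ T) = 0` (the
relation only has the `S` with `|S| < k`, but `w` vanishes on the others). If
`i ∈ L ∩ T`, the terms for `S` and `S ∪ {i}` cancel. If `L` and `T` are disjoint, the sum is a
coefficient of `(1 + X)^|L| · (1 + X)^{-(n-k)} = (1 + X)^{|L|-(n-k)}` in `𝔽₂⟦X⟧`, of index larger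
than the exponent. Hence `φ₂` factors through `A_{n,k}`.
-/

open Finset

theorem PowerSeries.coeff_one_add_X_pow {R : Type*} [CommSemiring R] (N m : ℕ) :
    coeff m ((1 + X : PowerSeries R) ^ N) = N.choose m := by
  rw [← Polynomial.coeff_one_add_X_pow R N m, ← Polynomial.coeff_coe]
  push_cast
  rfl

theorem sum_range_choose_mul_add_choose_eq_zero {p ℓ m : ℕ} (hpℓ : p < ℓ)
    (hℓm : ℓ < p + 1 + m) :
    ∑ j ∈ range (m + 1), (ℓ.choose j * (p + (m - j)).choose p : ZMod 2) = 0 := by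
  rw [← Nat.sum_antidiagonal_eq_sum_range_succ fun i j => (ℓ.choose i * (p + j).choose p : ZMod 2)]
  obtain ⟨e, rfl⟩ : ∃ e, ℓ = e + (p + 1) := ⟨ℓ - (p + 1), by omega⟩
  have one_sub_X : (1 - PowerSeries.X : PowerSeries (ZMod 2)) = 1 + PowerSeries.X := by
    ext i; simp only [map_sub, map_add, CharTwo.sub_eq_add]
  have key : (1 + PowerSeries.X) ^ (e + (p + 1)) *
      PowerSeries.mk (fun i => ((p + i).choose p : ZMod 2)) = (1 + PowerSeries.X) ^ e := by
    rw [pow_add, mul_assoc, mul_comm (_ ^ (p + 1)), ← one_sub_X,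
      PowerSeries.mk_add_choose_mul_one_sub_pow_eq_one, mul_one]
  have := congrArg (PowerSeries.coeff m) key
  simpa only [PowerSeries.coeff_mul, PowerSeries.coeff_one_add_X_pow, PowerSeries.coeff_mk,
    Nat.choose_eq_zero_of_lt (show e < m by omega), Nat.cast_zero] using this

theorem sum_powerset_union_eq_zero_of_mem {ι R : Type*} [DecidableEq ι] [Ring R] [CharP R 2]
    (f : Finset ι → R) {L T : Finset ι} {i : ι} (hiL : i ∈ L) (hiT : i ∈ T) :
    ∑ S ∈ L.powerset, f (S ∪ T) = 0 := by
  rw [← insert_erase hiL, sum_powerset_insert (notMem_erase i L)]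
  simp only [insert_union, insert_eq_of_mem (mem_union_right _ hiT), CharTwo.add_self_eq_zero]

/-- The guard `j < k` is needed: for `j ≥ k` the truncated `k - 1 - j` is `0`, and `C(·, 0) = 1`.
-/
def polygonWeight (n k j : ℕ) : ZMod 2 :=
  if j < k then ((n - 2 - j).choose (k - 1 - j) : ZMod 2) else 0

theorem polygonWeight_of_le {n k j : ℕ} (h : k ≤ j) : polygonWeight n k j = 0 :=
  if_neg (by omega)

theorem sum_powerset_polygonWeight_card_add_eq_zero {ι : Type*} {n k u : ℕ} (hn : 2 * k < n)
    (L : Finset ι) (hL : n - k ≤ #L) (hLu : #L + u ≤ n - 2) :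
    ∑ S ∈ L.powerset, polygonWeight n k (#S + u) = 0 := by
  rcases le_or_gt k u with hku | hku
  · exact sum_eq_zero fun S _ => polygonWeight_of_le (by omega)
  set m := k - 1 - u
  rw [sum_powerset_apply_card (fun j => polygonWeight n k (j + u)),
    ← sum_subset (range_subset_range.2 (show m + 1 ≤ #L + 1 by omega))
      fun j _ hj => by rw [polygonWeight_of_le (by simp at hj; omega), smul_zero]]
  calc ∑ j ∈ range (m + 1), (#L).choose j • polygonWeight n k (j + u)
      = ∑ j ∈ range (m + 1),
          ((#L).choose j * (n - k - 1 + (m - j)).choose (n - k - 1) : ZMod 2) :=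
        sum_congr rfl fun j hj => by
          simp only [mem_range] at hj
          rw [nsmul_eq_mul, polygonWeight, if_pos (by omega), Nat.choose_symm_add,
            show n - 2 - (j + u) = n - k - 1 + (m - j) by omega,
            show k - 1 - (j + u) = m - j by omega]
    _ = 0 := sum_range_choose_mul_add_choose_eq_zero (by omega) (by omega)

theorem sum_powerset_polygonWeight_card_union_eq_zero {ι : Type*} [DecidableEq ι] {n k : ℕ}
    (hn : 2 * k < n) {L T : Finset ι} (hL : n - k ≤ #L) (hLT : #L + #T ≤ n - 2) :
    ∑ S ∈ L.powerset, polygonWeight n k #(S ∪ T) = 0 := by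
  by_cases hdisj : Disjoint L T
  · rw [← sum_powerset_polygonWeight_card_add_eq_zero hn L hL hLT]
    refine sum_congr rfl fun S hS => ?_
    rw [card_union_of_disjoint (disjoint_of_subset_left (mem_powerset.1 hS) hdisj)]
  · obtain ⟨i, hiL, hiT⟩ := not_disjoint_iff.1 hdisj
    exact sum_powerset_union_eq_zero_of_mem (fun S => polygonWeight n k #S) hiL hiT

theorem MvPolynomial.prod_X_eq_monomial_sum_single {σ ι R : Type*} [CommSemiring R]
    (S : Finset ι) (f : ι → σ) :
    ∏ i ∈ S, (X (f i) : MvPolynomial σ R) = monomial (∑ i ∈ S, Finsupp.single (f i) 1) 1 :=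
  (monomial_sum_one S _).symm

theorem Finsupp.degree_sum_single_one {σ ι : Type*} (S : Finset ι) (f : ι → σ) :
    (∑ i ∈ S, Finsupp.single (f i) 1).degree = #S := by
  simp

theorem MvPolynomial.map_eq_zero_of_mem_span_of_monomial_mul {σ R M : Type*} [CommSemiring R]
    [AddCommMonoid M] [Module R M] (φ : MvPolynomial σ R →ₗ[R] M) {G : Set (MvPolynomial σ R)}
    (hG : ∀ g ∈ G, ∀ d, φ (monomial d 1 * g) = 0) : ∀ x ∈ Ideal.span G, φ x = 0 := by
  suffices h : ∀ x ∈ Ideal.span G, ∀ p, φ (p * x) = 0 from fun x hx => by simpa using h x hx 1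
  intro x hx
  induction hx using Submodule.span_induction with
  | mem g hg =>
    have h : φ ∘ₗ LinearMap.mulRight R g = 0 := (basisMonomials σ R).ext fun d => hG g hg d
    exact LinearMap.congr_fun h
  | zero => simp
  | add x y _ _ hx hy => intro p; rw [mul_add, map_add, hx, hy, add_zero]
  | smul a x _ hx => intro p; rw [smul_eq_mul, ← mul_assoc]; exact hx _

theorem Ideal.exists_linearMap_quotient_mk {R A M : Type*} [CommRing R] [CommRing A]
    [Algebra R A] [AddCommGroup M] [Module R M] (I : Ideal A) (φ : A →ₗ[R] M)
    (h : ∀ a ∈ I, φ a = 0) : ∃ ψ : A ⧸ I →ₗ[R] M, ∀ a, ψ (Ideal.Quotient.mk I a) = φ a :=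
  ⟨(Submodule.liftQ (I.restrictScalars R) φ h).comp
    (Submodule.Quotient.restrictScalarsEquiv R I).symm.toLinearMap, fun _ => rfl⟩

section VSupport

variable {ι : Type*}

noncomputable def vSupport (d : Option ι →₀ ℕ) : Finset ι :=
  d.support.preimage some (Option.some_injective ι).injOn

@[simp]
theorem mem_vSupport {d : Option ι →₀ ℕ} {i : ι} : i ∈ vSupport d ↔ d (some i) ≠ 0 := by
  simp [vSupport]

theorem card_vSupport_le_degree (d : Option ι →₀ ℕ) : #(vSupport d) ≤ d.degree :=
  calc #(vSupport d) ≤ #d.support :=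
        card_le_card_of_injOn some (fun i hi => by simpa using hi)
          (Option.some_injective ι).injOn
    _ = ∑ a ∈ d.support, 1 := card_eq_sum_ones _
    _ ≤ d.degree :=
        sum_le_sum fun a ha => Nat.one_le_iff_ne_zero.2 (Finsupp.mem_support_iff.1 ha)

theorem vSupport_add_single_none (d : Option ι →₀ ℕ) (a : ℕ) :
    vSupport (d + Finsupp.single none a) = vSupport d := by
  ext i; simp

variable [DecidableEq ι]

theorem vSupport_add_single_some (d : Option ι →₀ ℕ) {a : ℕ} (ha : a ≠ 0) (i : ι) :
    vSupport (d + Finsupp.single (some i) a) = insert i (vSupport d) := by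
  ext j; by_cases hj : j = i <;> simp [hj, ha]

theorem vSupport_add_sum_single (d : Option ι →₀ ℕ) (S : Finset ι) :
    vSupport (d + ∑ i ∈ S, Finsupp.single (some i) 1) = vSupport d ∪ S := by
  induction S using Finset.induction_on generalizing d with
  | empty => simp
  | insert i S hiS ih =>
    rw [sum_insert hiS, ← add_assoc, ih, vSupport_add_single_some _ one_ne_zero, union_insert,
      insert_union]

end VSupport

section WeightFunctional

variable {ι : Type*} (n k : ℕ)

noncomputable def monomialWeight (d : Option ι →₀ ℕ) : ZMod 2 :=
  if d.degree = n - 4 then polygonWeight n k #(vSupport d) else 0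

noncomputable def weightFunctional : MvPolynomial (Option ι) (ZMod 2) →ₗ[ZMod 2] ZMod 2 :=
  (basisMonomials (Option ι) (ZMod 2)).constr (ZMod 2) (monomialWeight n k)

theorem weightFunctional_monomial (d : Option ι →₀ ℕ) :
    weightFunctional n k (monomial d 1) = monomialWeight n k d :=
  (basisMonomials (Option ι) (ZMod 2)).constr_basis (ZMod 2) _ d

variable [DecidableEq ι]

theorem weightFunctional_monomial_mul_sq_add (d : Option ι →₀ ℕ) (i : ι) :
    weightFunctional n k (monomial d 1 * (X (some i) ^ 2 + X (some i) * X none)) = 0 := by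
  have hdeg : (d + Finsupp.single (some i) 2).degree =
      (d + (Finsupp.single (some i) 1 + Finsupp.single none 1)).degree := by
    simp only [map_add, Finsupp.degree_single]
  have hsupp : vSupport (d + Finsupp.single (some i) 2) =
      vSupport (d + (Finsupp.single (some i) 1 + Finsupp.single none 1)) := by
    rw [← add_assoc, vSupport_add_single_none, vSupport_add_single_some _ two_ne_zero,
      vSupport_add_single_some _ one_ne_zero]
  rw [X_pow_eq_monomial]
  simp only [X, mul_add, map_add, monomial_mul, one_mul]
  rw [weightFunctional_monomial, weightFunctional_monomial, monomialWeight, monomialWeight, hdeg,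
    hsupp, CharTwo.add_self_eq_zero]

theorem weightFunctional_monomial_mul_prod_X_some (d : Option ι →₀ ℕ) {S : Finset ι}
    (hS : k ≤ #S) : weightFunctional n k (monomial d 1 * ∏ i ∈ S, X (some i)) = 0 := by
  rw [prod_X_eq_monomial_sum_single, monomial_mul, one_mul, weightFunctional_monomial,
    monomialWeight, vSupport_add_sum_single]
  split_ifs
  · exact polygonWeight_of_le (hS.trans (card_le_card subset_union_right))
  · rfl

variable {n k}

theorem weightFunctional_monomial_mul_sum_powerset (hk : 1 ≤ k) (hn : 2 * k < n)
    (d : Option ι →₀ ℕ) {L : Finset ι} (hL : n - k ≤ #L) :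
    weightFunctional n k (monomial d 1 * ∑ S ∈ L.powerset.filter (fun S => #S ≤ k - 1),
      X none ^ (#L - 1 - #S) * ∏ i ∈ S, X (some i)) = 0 := by
  have hterm : ∀ S ∈ L.powerset.filter (fun S => #S ≤ k - 1),
      weightFunctional n k (monomial d 1 * (X none ^ (#L - 1 - #S) * ∏ i ∈ S, X (some i))) =
        if d.degree + (#L - 1) = n - 4 then polygonWeight n k #(S ∪ vSupport d) else 0 := by
    intro S hS
    have hSk : #S ≤ k - 1 := (mem_filter.1 hS).2
    rw [X_pow_eq_monomial, prod_X_eq_monomial_sum_single, monomial_mul, monomial_mul, one_mul,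
      one_mul, weightFunctional_monomial, monomialWeight, ← add_assoc, vSupport_add_sum_single,
      vSupport_add_single_none, union_comm]
    simp only [map_add, Finsupp.degree_single, Finsupp.degree_sum_single_one]
    congr 2
    omega
  rw [mul_sum, map_sum, sum_congr rfl hterm]
  split_ifs with hdeg
  · rw [sum_filter_of_ne fun S _ hS => ?_]
    · exact sum_powerset_polygonWeight_card_union_eq_zero hn hL
        (by have := card_vSupport_le_degree d; omega)
    · by_contra hSk
      exact hS (polygonWeight_of_le ((by omega : k ≤ #S).trans (card_le_card subset_union_left)))
  · exact sum_const_zero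

theorem weightFunctional_eq_zero_of_mem_polygonIdeal (hk : 1 ≤ k) (hn : 2 * k < n) :
    ∀ x ∈ polygonIdeal n k, weightFunctional n k x = 0 :=
  map_eq_zero_of_mem_span_of_monomial_mul _ fun g hg d => by
    rcases hg with (⟨i, rfl⟩ | ⟨S, hS, rfl⟩) | ⟨L, hL, rfl⟩
    · exact weightFunctional_monomial_mul_sq_add n k d i
    · exact weightFunctional_monomial_mul_prod_X_some n k d hS.ge
    · exact weightFunctional_monomial_mul_sum_powerset hk hn d hL.1

end WeightFunctional

/-- There is an `F₂`-linear map `φ₂` on the degree-`(n−4)` component of `A_{n,k}`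
sending the class of the monomial `R^{n−4−|S|}·∏_{i∈S} V_i` (for
`|S| ≤ min(k−1, n−4)`) to the mod-2 residue of `C(n−2−|S|, k−1−|S|)`.
Here `S : Finset (Fin (n-1))`, with `i ∈ S` corresponding to the variable
`X (some i)`, i.e. `V_{i+1}`. -/
theorem exists_phi2 (n k : ℕ) (hk : 2 ≤ k) (hnk : 2 * k < n) :
    ∃ φ₂ : homComponent n k (n - 4) →ₗ[ZMod 2] ZMod 2,
      ∀ S : Finset (Fin (n - 1)), S.card ≤ min (k - 1) (n - 4) →
        ∀ hx : Ideal.Quotient.mk (polygonIdeal n k)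
            (X none ^ (n - 4 - S.card) * ∏ i ∈ S, X (some i)) ∈ homComponent n k (n - 4),
          φ₂ ⟨Ideal.Quotient.mk (polygonIdeal n k)
              (X none ^ (n - 4 - S.card) * ∏ i ∈ S, X (some i)), hx⟩ =
            (Nat.choose (n - 2 - S.card) (k - 1 - S.card) : ZMod 2) := by
  obtain ⟨ψ, hψ⟩ := Ideal.exists_linearMap_quotient_mk (polygonIdeal n k) (weightFunctional n k)
    (weightFunctional_eq_zero_of_mem_polygonIdeal (by omega) hnk)
  refine ⟨ψ ∘ₗ (homComponent n k (n - 4)).subtype, fun S hS _ => ?_⟩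
  have hdeg : (Finsupp.single none (n - 4 - #S) + ∑ i ∈ S, Finsupp.single (some i) 1).degree =
      n - 4 := by
    simp only [map_add, Finsupp.degree_single, Finsupp.degree_sum_single_one]
    omega
  have hsupp :
      vSupport (Finsupp.single none (n - 4 - #S) + ∑ i ∈ S, Finsupp.single (some i) 1) = S := by
    ext j; simp [Finsupp.single_apply]
  rw [LinearMap.comp_apply, Submodule.subtype_apply, hψ, X_pow_eq_monomial,
    prod_X_eq_monomial_sum_single, monomial_mul, one_mul, weightFunctional_monomial,
    monomialWeight, if_pos hdeg, hsupp, polygonWeight, if_pos (by omega)]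
end

section
/- Let k ≥ 1 and n > 2k be integers, and let ℓ be an integer with n−k ≤ ℓ ≤ n−3. Then ∑_{i=0}^{k−1} C(ℓ, i) · C(n−2−i, k−1−i) ≡ 0 (mod 2). -/
/-!
Over `𝔽₂`, `∑_{i ≤ ℓ} C(ℓ, i) X^i (X + 1)^(m - i) = (X + 1)^(m - ℓ) (X + (X + 1))^ℓ = (X + 1)^(m - ℓ)`,
since `X + (X + 1) = 1` in characteristic two. Comparing coefficients of `X^r` gives
`∑_{i ≤ r} C(ℓ, i) C(m - i, r - i) ≡ C(m - ℓ, r) (mod 2)`. With `m = n - 2` and `r = k - 1`,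
the hypotheses force `m - ℓ < r`, so the right-hand side vanishes.
-/

open Finset Polynomial

theorem sum_choose_smul_X_pow_mul_X_add_one_pow {R : Type*} [CommSemiring R] {ℓ m : ℕ}
    (h : ℓ ≤ m) :
    ∑ i ∈ range (ℓ + 1), ℓ.choose i • ((X : R[X]) ^ i * (X + 1) ^ (m - i)) =
      (X + 1) ^ (m - ℓ) * (X + (X + 1)) ^ ℓ := by
  rw [add_pow X (X + 1), mul_sum]
  refine sum_congr rfl fun i hi => ?_
  have hi : i ≤ ℓ := Nat.lt_succ_iff.mp (mem_range.mp hi)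
  rw [nsmul_eq_mul, show m - i = (ℓ - i) + (m - ℓ) by omega, pow_add]
  ring

theorem coeff_sum_choose_smul_X_pow_mul_X_add_one_pow {R : Type*} [Semiring R] (ℓ m r : ℕ) :
    (∑ i ∈ range (ℓ + 1), ℓ.choose i • ((X : R[X]) ^ i * (X + 1) ^ (m - i))).coeff r =
      ∑ i ∈ range (r + 1), ((ℓ.choose i * (m - i).choose (r - i) : ℕ) : R) := by
  have coeff_term (i : ℕ) : (ℓ.choose i • ((X : R[X]) ^ i * (X + 1) ^ (m - i))).coeff r =
      if i ≤ r then ((ℓ.choose i * (m - i).choose (r - i) : ℕ) : R) else 0 := by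
    rw [coeff_smul, coeff_X_pow_mul', coeff_X_add_one_pow, smul_ite, smul_zero, nsmul_eq_mul,
      Nat.cast_mul]
  simp only [finsetSum_coeff, coeff_term, ← sum_filter]
  refine sum_subset_zero_on_sdiff (fun i => ?_) (fun i hi => ?_) (fun _ _ => rfl)
  · simp only [mem_filter, mem_range]
    omega
  · simp only [mem_sdiff, mem_filter, mem_range] at hi
    rw [Nat.choose_eq_zero_of_lt (by omega : ℓ < i), zero_mul, Nat.cast_zero]

theorem sum_choose_mul_choose_sub_modEq_two {ℓ m : ℕ} (h : ℓ ≤ m) (r : ℕ) :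
    ∑ i ∈ range (r + 1), ℓ.choose i * (m - i).choose (r - i) ≡ (m - ℓ).choose r [MOD 2] := by
  rw [← ZMod.natCast_eq_natCast_iff, ← coeff_X_add_one_pow (ZMod 2), Nat.cast_sum,
    ← coeff_sum_choose_smul_X_pow_mul_X_add_one_pow, sum_choose_smul_X_pow_mul_X_add_one_pow h,
    ← add_assoc, CharTwo.add_self_eq_zero, zero_add, one_pow, mul_one]

/-- For `k ≥ 1`, `n > 2k` and `n − k ≤ ℓ ≤ n − 3`,
`∑_{i=0}^{k−1} C(ℓ, i) · C(n−2−i, k−1−i) ≡ 0 (mod 2)`. -/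
theorem sum_choose_mul_choose_even (n k ℓ : ℕ) (hk : 1 ≤ k) (hnk : 2 * k < n)
    (hℓ₁ : n - k ≤ ℓ) (hℓ₂ : ℓ ≤ n - 3) :
    (∑ i ∈ Finset.range k, Nat.choose ℓ i * Nat.choose (n - 2 - i) (k - 1 - i)) % 2 = 0 := by
  obtain ⟨r, rfl⟩ : ∃ r, k = r + 1 := ⟨k - 1, by omega⟩
  have hmodEq := sum_choose_mul_choose_sub_modEq_two (show ℓ ≤ n - 2 by omega) r
  rwa [Nat.choose_eq_zero_of_lt (by omega : n - 2 - ℓ < r)] at hmodEq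
end

section
/- Assume Notation (t, k₀, B, D, C). Then: (a) the binomial coefficient C(n−2−(C+1), k−1−(C+1)) = C(2^t(B+1)−1, 2^t−1−D) is odd; (b) for every i with k₀ ≤ i ≤ C, the binomial coefficient C(n−2−i, k−1−i) is even; (c) if B is odd, then for every i with 0 ≤ i ≤ C, the binomial coefficient C(n−2−i, k−1−i) is even. -/
/-!
Write `n - 2 - i = (2^t B + D) + (k - 1 - i)`. By Kummer's theorem `C(a + b, a)` is even as soon
as the binary addition of `a` and `b` has a carry. For `k₀ ≤ i ≤ C` the lowest `t` bits of
`k - 1 - i < 2^t` and of `D` overflow together; if `B` is odd, the lowest `t + 1` bits of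
`2^t B + D` are `2^t + D`, and for `i < k₀` they overflow together with `k - 1 - i ≥ 2^t`.
For (a), the lowest `t` bits of `2^t (B + 1) - 1` are all one, so Lucas's theorem makes
`C(2^t (B + 1) - 1, r)` odd for every `r < 2^t`.
-/

namespace Nat

theorem Prime.dvd_choose_add_of_carry {p a b j : ℕ} (hp : p.Prime) (hj : j ≠ 0)
    (hcarry : p ^ j ≤ a % p ^ j + b % p ^ j) : p ∣ (b + a).choose a := by
  have hj_le : p ^ j ≤ b + a :=
    hcarry.trans (Nat.add_comm b a ▸ Nat.add_le_add (mod_le a _) (mod_le b _))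
  have hmem : j ∈ {i ∈ Finset.Ico 1 (log p (b + a) + 1) | p ^ i ≤ a % p ^ i + b % p ^ i} := by
    simp only [Finset.mem_filter, Finset.mem_Ico]
    exact ⟨⟨by omega, Nat.lt_succ_of_le (Nat.le_log_of_pow_le hp.one_lt hj_le)⟩, hcarry⟩
  rw [hp.dvd_iff_one_le_factorization (choose_pos (Nat.le_add_left a b)).ne',
    factorization_choose' hp (Nat.lt_succ_self _)]
  exact Finset.card_pos.mpr ⟨j, hmem⟩

theorem Prime.not_dvd_choose_pow_mul_succ_sub_one {p t r : ℕ} (hp : p.Prime) (m : ℕ)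
    (hr : r < p ^ t) : ¬ p ∣ (p ^ t * (m + 1) - 1).choose r := by
  have := Fact.mk hp
  have hp1 := hp.one_lt
  induction t generalizing r with
  | zero => simp_all [hp1.ne']
  | succ t ih =>
    set x := p ^ t * (m + 1) with hx
    have hx_pos : 0 < x := Nat.mul_pos (Nat.pow_pos hp.pos) m.succ_pos
    have hdigits : p ^ (t + 1) * (m + 1) - 1 = (p - 1) + p * (x - 1) := by
      have : p ^ (t + 1) * (m + 1) = p * x := by rw [hx, pow_succ]; ring
      rw [this, Nat.mul_sub_one]
      have : p ≤ p * x := Nat.le_mul_of_pos_right p hx_pos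
      omega
    have hmod : (p - 1 + p * (x - 1)) % p = p - 1 := by
      rw [Nat.add_mul_mod_self_left, Nat.mod_eq_of_lt (by omega)]
    have hdiv : (p - 1 + p * (x - 1)) / p = x - 1 := by
      rw [Nat.add_mul_div_left _ _ hp.pos, Nat.div_eq_of_lt (by omega), zero_add]
    have hlucas := Choose.choose_modEq_choose_mod_mul_choose_div_nat
      (p := p) (n := p - 1 + p * (x - 1)) (k := r)
    rw [hmod, hdiv] at hlucas
    rw [hdigits, hlucas.dvd_iff dvd_rfl, hp.prime.dvd_mul, not_or,
      ← hp.coprime_iff_not_dvd]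
    refine ⟨hp.coprime_choose_of_lt (by omega) (by have := r.mod_lt hp.pos; omega), ih ?_⟩
    rw [pow_succ] at hr
    exact Nat.div_lt_of_lt_mul (by rwa [mul_comm])

end Nat

theorem techlem_general (n k t k₀ B D C : ℕ)
    (hk₀ : 1 ≤ k₀) (hk₀' : k₀ ≤ 2 ^ t) (hk : k = 2 ^ t + k₀)
    (hD : D < 2 ^ t) (hn : n = k + 1 + 2 ^ t * B + D)
    (hC : C = k₀ + D - 1) :
    (Nat.choose (n - 2 - (C + 1)) (k - 1 - (C + 1)) =
        Nat.choose (2 ^ t * (B + 1) - 1) (2 ^ t - 1 - D) ∧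
      Odd (Nat.choose (n - 2 - (C + 1)) (k - 1 - (C + 1)))) ∧
    (∀ i, k₀ ≤ i → i ≤ C → Even (Nat.choose (n - 2 - i) (k - 1 - i))) ∧
    (Odd B → ∀ i ≤ C, Even (Nat.choose (n - 2 - i) (k - 1 - i))) := by
  have hsplit : ∀ i ≤ C, n - 2 - i = (2 ^ t * B + D) + (k - 1 - i) := fun i hi => by omega
  have hlarge : ∀ i, k₀ ≤ i → i ≤ C → Even ((n - 2 - i).choose (k - 1 - i)) := by
    intro i hi hiC
    have ht : t ≠ 0 := by rintro rfl; omega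
    rw [hsplit i hiC, even_iff_two_dvd]
    refine Nat.prime_two.dvd_choose_add_of_carry ht ?_
    rw [Nat.mul_add_mod, Nat.mod_eq_of_lt hD, Nat.mod_eq_of_lt (by omega)]
    omega
  refine ⟨?_, hlarge, ?_⟩
  · have hN : n - 2 - (C + 1) = 2 ^ t * (B + 1) - 1 := by rw [mul_add_one]; omega
    rw [hN, show k - 1 - (C + 1) = 2 ^ t - 1 - D by omega, ← Nat.not_even_iff_odd,
      even_iff_two_dvd]
    exact ⟨rfl, Nat.prime_two.not_dvd_choose_pow_mul_succ_sub_one B (by omega)⟩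
  · rintro ⟨b, rfl⟩ i hi
    obtain hik | hik := le_or_gt k₀ i
    · exact hlarge i hik hi
    have hpow : 2 ^ (t + 1) = 2 ^ t + 2 ^ t := by rw [pow_succ]; ring
    rw [hsplit i hi, even_iff_two_dvd]
    refine Nat.prime_two.dvd_choose_add_of_carry (j := t + 1) t.succ_ne_zero ?_
    rw [show 2 ^ t * (2 * b + 1) + D = (2 ^ t + D) + 2 ^ (t + 1) * b by rw [pow_succ]; ring,
      Nat.add_mul_mod_self_left, Nat.mod_eq_of_lt (by omega), Nat.mod_eq_of_lt (by omega)]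
    omega

/-- With `k = 2^t + k₀` (`1 ≤ k₀ ≤ 2^t`), `n = k + 1 + 2^t·B + D` (`B ≥ 1`,
`0 ≤ D < 2^t`) and `C = k₀ + D − 1`:
(a) `C(n−2−(C+1), k−1−(C+1)) = C(2^t(B+1)−1, 2^t−1−D)` is odd;
(b) for `k₀ ≤ i ≤ C`, `C(n−2−i, k−1−i)` is even;
(c) if `B` is odd, then for `0 ≤ i ≤ C`, `C(n−2−i, k−1−i)` is even. -/
theorem techlem (n k t k₀ B D C : ℕ)
    (hk₀ : 1 ≤ k₀) (hk₀' : k₀ ≤ 2 ^ t) (hk : k = 2 ^ t + k₀)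
    (hB : 1 ≤ B) (hD : D < 2 ^ t) (hn : n = k + 1 + 2 ^ t * B + D)
    (hC : C = k₀ + D - 1) :
    (Nat.choose (n - 2 - (C + 1)) (k - 1 - (C + 1)) =
        Nat.choose (2 ^ t * (B + 1) - 1) (2 ^ t - 1 - D) ∧
      Odd (Nat.choose (n - 2 - (C + 1)) (k - 1 - (C + 1)))) ∧
    (∀ i, k₀ ≤ i → i ≤ C → Even (Nat.choose (n - 2 - i) (k - 1 - i))) ∧
    (Odd B → ∀ i ≤ C, Even (Nat.choose (n - 2 - i) (k - 1 - i))) :=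
  techlem_general n k t k₀ B D C hk₀ hk₀' hk hD hn hC
end

section
/- Let t ≥ 0, let B ≥ 2 be even, let k be an integer with 2 ≤ k ≤ 2^{t+1}, and let m be an integer with 1 ≤ m ≤ k−2. Then ∑_{i=0}^{k−2} C(2^t·B + m, i) ≡ 0 (mod 2). -/
/-!
Since `2^t B = 2^(t+1) (B/2)` and `m, i < 2^(t+1)`, Lucas's theorem gives
`C(2^t B + m, i) ≡ C(m, i) (mod 2)` for every `i ≤ k - 2`. As `m ≤ k - 2`, the sum then
runs over all binomial coefficients of `m`, so it is congruent to `2^m`, which is even.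
-/

open Finset

namespace Choose

theorem choose_pow_mul_add_modEq_choose {p : ℕ} [Fact p.Prime] (a q : ℕ) {m i : ℕ}
    (hm : m < p ^ a) (hi : i < p ^ a) :
    (p ^ a * q + m).choose i ≡ m.choose i [MOD p] := by
  induction a generalizing m i with
  | zero =>
    obtain ⟨rfl, rfl⟩ : m = 0 ∧ i = 0 := by simp_all
    simp [Nat.ModEq.refl]
  | succ a ih =>
    have hp : 0 < p := (Fact.out : p.Prime).pos
    have hmod : (p ^ (a + 1) * q + m) % p = m % p := by
      rw [pow_succ', mul_assoc, Nat.mul_add_mod]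
    have hdiv : (p ^ (a + 1) * q + m) / p = p ^ a * q + m / p := by
      rw [pow_succ', mul_assoc, Nat.mul_add_div hp]
    have hm' : m / p < p ^ a := Nat.div_lt_of_lt_mul (by rwa [← pow_succ'])
    have hi' : i / p < p ^ a := Nat.div_lt_of_lt_mul (by rwa [← pow_succ'])
    calc (p ^ (a + 1) * q + m).choose i
        ≡ (m % p).choose (i % p) * (p ^ a * q + m / p).choose (i / p) [MOD p] := by
          rw [← hmod, ← hdiv]; exact choose_modEq_choose_mod_mul_choose_div_nat
      _ ≡ (m % p).choose (i % p) * (m / p).choose (i / p) [MOD p] :=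
          (ih hm' hi').mul_left _
      _ ≡ m.choose i [MOD p] := choose_modEq_choose_mod_mul_choose_div_nat.symm

end Choose

theorem Nat.sum_range_choose_of_lt {m r : ℕ} (h : m < r) :
    ∑ i ∈ range r, m.choose i = 2 ^ m := by
  rw [← Nat.sum_range_choose m]
  refine (sum_subset (range_subset_range.mpr h) fun i hi hi' => ?_).symm
  exact Nat.choose_eq_zero_of_lt (by simpa using hi')

theorem sum_choose_even_general (t B k m : ℕ) (hBeven : Even B)
    (hk' : k ≤ 2 ^ (t + 1)) (hm : 1 ≤ m) (hm' : m ≤ k - 2) :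
    (∑ i ∈ Finset.range (k - 1), Nat.choose (2 ^ t * B + m) i) % 2 = 0 := by
  obtain ⟨b, rfl⟩ := hBeven
  have hn : 2 ^ t * (b + b) + m = 2 ^ (t + 1) * b + m := by ring
  have hlucas : ∀ i ∈ range (k - 1), (2 ^ t * (b + b) + m).choose i ≡ m.choose i [MOD 2] := by
    intro i hi
    rw [hn]
    exact Choose.choose_pow_mul_add_modEq_choose (t + 1) b (by omega)
      (by rw [mem_range] at hi; omega)
  calc (∑ i ∈ range (k - 1), (2 ^ t * (b + b) + m).choose i) % 2
      = (∑ i ∈ range (k - 1), m.choose i) % 2 := Nat.ModEq.sum hlucas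
    _ = 2 ^ m % 2 := by rw [Nat.sum_range_choose_of_lt (by omega)]
    _ = 0 := Nat.mod_eq_zero_of_dvd (dvd_pow_self 2 (by omega))

/-- For `B ≥ 2` even, `2 ≤ k ≤ 2^{t+1}` and `1 ≤ m ≤ k − 2`,
`∑_{i=0}^{k−2} C(2^t·B + m, i) ≡ 0 (mod 2)`. -/
theorem sum_choose_even (t B k m : ℕ) (hBeven : Even B) (hB : 2 ≤ B)
    (hk : 2 ≤ k) (hk' : k ≤ 2 ^ (t + 1)) (hm : 1 ≤ m) (hm' : m ≤ k - 2) :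
    (∑ i ∈ Finset.range (k - 1), Nat.choose (2 ^ t * B + m) i) % 2 = 0 :=
  sum_choose_even_general t B k m hBeven hk' hm hm'
end

section
/- Let t ≥ 1 and let a, b, m be natural numbers such that a + b + 1 ≡ 0 (mod 2^{t+1}) and m mod 2^t ≠ 0. Then the product C(a, m) · C(b, m) is even. -/
/-!
Pick a binary digit `i < t` of `m` equal to `1`. Since `a + b + 1 ≡ 0 (mod 2^{i+1})`, the `i`-th
digits of `a` and `b` are complementary, so one of `a`, `b` has digit `0` there; by Lucas's
theorem the corresponding binomial coefficient `C(·, m)` is then even.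
-/

open Finset

theorem Nat.prime_dvd_choose_of_digit_lt {p n k : ℕ} [Fact p.Prime] (i : ℕ)
    (h : n / p ^ i % p < k / p ^ i % p) : p ∣ n.choose k := by
  have hprod : ∏ j ∈ range (i + 1), (n / p ^ j % p).choose (k / p ^ j % p) = 0 :=
    prod_eq_zero (self_mem_range_succ i) (Nat.choose_eq_zero_of_lt h)
  have hlucas := Choose.choose_modEq_choose_mul_prod_range_choose (p := p) (n := n) (k := k) (i + 1)
  rw [hprod, Nat.cast_zero, mul_zero] at hlucas
  exact Int.natCast_dvd_natCast.mp (Int.modEq_zero_iff_dvd.mp hlucas)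

theorem Nat.two_dvd_choose_of_testBit {n k i : ℕ} (hn : n.testBit i = false)
    (hk : k.testBit i = true) : 2 ∣ n.choose k := by
  have : Fact (Nat.Prime 2) := ⟨Nat.prime_two⟩
  refine Nat.prime_dvd_choose_of_digit_lt i ?_
  rw [Nat.testBit_eq_decide_div_mod_eq] at hn hk
  simp only [decide_eq_true_eq, decide_eq_false_iff_not] at hn hk
  omega

theorem Nat.mod_two_pow_add_mod_two_pow_of_dvd {a b n : ℕ} (h : 2 ^ n ∣ a + b + 1) :
    a % 2 ^ n + (b % 2 ^ n + 1) = 2 ^ n := by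
  have ha := Nat.mod_lt a (Nat.two_pow_pos n)
  have hb := Nat.mod_lt b (Nat.two_pow_pos n)
  refine Nat.eq_of_dvd_of_lt_two_mul (by omega) ?_ (by omega)
  have hmod : a % 2 ^ n + (b % 2 ^ n + 1) ≡ a + (b + 1) [MOD 2 ^ n] :=
    (Nat.mod_modEq a _).add ((Nat.mod_modEq b _).add_right 1)
  exact (hmod.dvd_iff dvd_rfl).mpr (by rwa [← Nat.add_assoc])

theorem Nat.testBit_eq_not_testBit_of_two_pow_dvd {a b n i : ℕ} (h : 2 ^ n ∣ a + b + 1)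
    (hi : i < n) : a.testBit i = !b.testBit i := by
  have ha : a % 2 ^ n = 2 ^ n - (b % 2 ^ n + 1) := by
    have := Nat.mod_two_pow_add_mod_two_pow_of_dvd h
    omega
  have hbit := congrArg (Nat.testBit · i) ha
  simpa [Nat.testBit_two_pow_sub_succ (Nat.mod_lt b (Nat.two_pow_pos n)), hi] using hbit

theorem choose_mul_choose_even_general (t a b m : ℕ)
    (hab : (a + b + 1) % 2 ^ (t + 1) = 0) (hm : m % 2 ^ t ≠ 0) :
    Even (Nat.choose a m * Nat.choose b m) := by
  obtain ⟨i, hmi⟩ := Nat.exists_testBit_of_ne_zero hm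
  simp only [Nat.testBit_mod_two_pow, Bool.and_eq_true, decide_eq_true_eq] at hmi
  obtain ⟨hit, hmi⟩ := hmi
  have hdigits := Nat.testBit_eq_not_testBit_of_two_pow_dvd (Nat.dvd_of_mod_eq_zero hab)
    (Nat.lt_succ_of_lt hit)
  rw [even_iff_two_dvd]
  cases hbi : b.testBit i
  · exact (Nat.two_dvd_choose_of_testBit hbi hmi).mul_left _
  · rw [hbi] at hdigits
    exact (Nat.two_dvd_choose_of_testBit hdigits hmi).mul_right _

/-- If `t ≥ 1`, `a + b + 1 ≡ 0 (mod 2^{t+1})` (so the binary digits of `a` and `b`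
in positions `0,…,t` are complementary) and `m mod 2^t ≠ 0`, then
`C(a, m) · C(b, m)` is even. -/
theorem choose_mul_choose_even (t a b m : ℕ) (ht : 1 ≤ t)
    (hab : (a + b + 1) % 2 ^ (t + 1) = 0) (hm : m % 2 ^ t ≠ 0) :
    Even (Nat.choose a m * Nat.choose b m) :=
  choose_mul_choose_even_general t a b m hab hm
end

section
/- Assume Notation (t, k₀, B, D, C) with B even and D ≥ 1, and set ℓ = ⌊log₂ D⌋. Assume C − 2^{⌊log₂ C⌋} < 2^{ℓ+1}. Then for all integers j, g with 0 ≤ j ≤ C and 0 ≤ g ≤ C, the product C(C, j) · C(C, g) · C(2^t(B+1) + (C−j−g) − 1, 2^t·B + D) · C(2^t(B+1) − 1 − (C−j−g), 2^t·B + D) is odd if and only if C(C,j) and C(C,g) are both odd, 2^{ℓ+1} divides C−j−g, and |C−j−g| < 2^t. (The first factor of the two middle binomial coefficients is interpreted with integer top 2^t(B+1)+(C−j−g)−1, which is positive under these hypotheses.) -/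
/-!
By Lucas' theorem (Kummer for `p = 2`), `C(N + x, N)` is odd iff `x &&& N = 0`. With
`N = 2^t B + D` and `M = 2^t - 1 - D`, the two tops are `N + (M + E)` and
`N + (M - E)`; one coefficient vanishes unless `|E| ≤ M`. If it holds, `M ± E < 2^(t+1)` and `B` is
even, so only the digits of `D` matter, and these lie below `2^(ℓ+1)`. Both residues of `M ± E`
mod `2^(ℓ+1)` are then at most the complement `2^(ℓ+1) - 1 - D` of `D`, while their sum is
congruent to twice it; as `2^ℓ ≤ D`, twice the complement is below `2^(ℓ+1)`, so both residues
equal it, i.e. `2^(ℓ+1) ∣ E`.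
-/

theorem Nat.odd_choose_add_iff (m n : ℕ) : Odd ((m + n).choose n) ↔ m &&& n = 0 := by
  induction m using Nat.strong_induction_on generalizing n with
  | _ m ih =>
  rcases Nat.eq_zero_or_pos m with rfl | hm
  · simp
  have lucas : (m + n).choose n ≡ ((m + n) % 2).choose (n % 2) * ((m + n) / 2).choose (n / 2)
      [MOD 2] := Choose.choose_modEq_choose_mod_mul_choose_div_nat
  have hand : m &&& n = 0 ↔ ¬(m % 2 = 1 ∧ n % 2 = 1) ∧ m / 2 &&& n / 2 = 0 := by
    rw [← Nat.and_mod_two_eq_one, ← Nat.and_div_two]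
    omega
  rw [Nat.odd_iff, lucas, ← Nat.odd_iff, Nat.odd_mul, hand]
  by_cases hodd : m % 2 = 1 ∧ n % 2 = 1
  · have hsum : (m + n) % 2 = 0 := by omega
    simp [hsum, hodd]
  · have hlow : ((m + n) % 2).choose (n % 2) = 1 := by
      rcases Nat.mod_two_eq_zero_or_one n with hn | hn
      · simp [hn]
      · simp [hn, show (m + n) % 2 = 1 by omega]
    have hhigh : (m + n) / 2 = m / 2 + n / 2 := by omega
    rw [hlow, hhigh, ih (m / 2) (by omega)]
    simp [hodd]

theorem Nat.and_mod_two_pow_right_of_lt {x r : ℕ} (hx : x < 2 ^ r) (y : ℕ) :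
    x &&& y % 2 ^ r = x &&& y := by
  rw [← Nat.mod_eq_of_lt hx, ← Nat.and_mod_two_pow, Nat.mod_eq_of_lt hx,
    Nat.mod_eq_of_lt (Nat.and_comm x y ▸ Nat.and_lt_two_pow y hx)]

theorem Nat.mod_two_pow_add_lt_of_and_eq_zero {x D s : ℕ} (hD : D < 2 ^ s) (h : x &&& D = 0) :
    x % 2 ^ s + D < 2 ^ s := by
  have hand : BitVec.ofNat s x &&& BitVec.ofNat s D = 0#s := by
    apply BitVec.eq_of_toNat_eq
    rw [BitVec.toNat_and, BitVec.toNat_ofNat, BitVec.toNat_ofNat, Nat.mod_eq_of_lt hD,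
      Nat.and_comm, Nat.and_mod_two_pow_right_of_lt hD, Nat.and_comm, h, BitVec.toNat_zero]
  have := BitVec.toNat_add_of_and_eq_zero hand
  simpa [Nat.mod_eq_of_lt hD, this] using (BitVec.ofNat s x + BitVec.ofNat s D).isLt

theorem Nat.two_pow_sub_one_sub_and_self {D s : ℕ} (hD : D < 2 ^ s) :
    (2 ^ s - 1 - D) &&& D = 0 := by
  have := congrArg BitVec.toNat (BitVec.not_and_self (BitVec.ofNat s D))
  rwa [BitVec.toNat_and, BitVec.toNat_not, BitVec.toNat_ofNat, Nat.mod_eq_of_lt hD,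
    BitVec.ofNat_eq_ofNat, BitVec.toNat_zero] at this

theorem Nat.and_eq_zero_of_modEq_two_pow_sub_one_sub {x D s : ℕ} (hD : D < 2 ^ s)
    (hx : x ≡ 2 ^ s - 1 - D [MOD 2 ^ s]) : x &&& D = 0 := by
  rw [Nat.and_comm, ← Nat.and_mod_two_pow_right_of_lt hD, hx,
    Nat.mod_eq_of_lt (by omega), Nat.and_comm, Nat.two_pow_sub_one_sub_and_self hD]

theorem Nat.odd_choose_two_pow_mul_add_add_iff {r q D x : ℕ} (hD : D < 2 ^ r) (hx : x < 2 ^ r) :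
    Odd ((2 ^ r * q + D + x).choose (2 ^ r * q + D)) ↔ x &&& D = 0 := by
  rw [add_comm _ x, Nat.odd_choose_add_iff, ← Nat.and_mod_two_pow_right_of_lt hx,
    Nat.mul_add_mod, Nat.mod_eq_of_lt hD]

theorem Nat.and_eq_zero_and_and_eq_zero_iff {s D a b : ℕ} (hsD : 2 ^ s ≤ 2 * D) (hDs : D < 2 ^ s)
    (hab : a + b ≡ 2 ^ s - 1 - D + (2 ^ s - 1 - D) [MOD 2 ^ s]) :
    a &&& D = 0 ∧ b &&& D = 0 ↔ a ≡ 2 ^ s - 1 - D [MOD 2 ^ s] := by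
  set r := 2 ^ s - 1 - D
  constructor
  · rintro ⟨ha, hb⟩
    have ha' := Nat.mod_two_pow_add_lt_of_and_eq_zero hDs ha
    have hb' := Nat.mod_two_pow_add_lt_of_and_eq_zero hDs hb
    have hsum : a % 2 ^ s + b % 2 ^ s = r + r := by
      rwa [Nat.ModEq, Nat.add_mod, Nat.mod_eq_of_lt (show a % 2 ^ s + b % 2 ^ s < 2 ^ s by omega),
        Nat.mod_eq_of_lt (show r + r < 2 ^ s by omega)] at hab
    rw [Nat.ModEq, Nat.mod_eq_of_lt (show r < 2 ^ s by omega)]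
    omega
  · intro ha
    have hb : b ≡ r [MOD 2 ^ s] := Nat.ModEq.add_left_cancel ha hab
    exact ⟨Nat.and_eq_zero_of_modEq_two_pow_sub_one_sub hDs ha,
      Nat.and_eq_zero_of_modEq_two_pow_sub_one_sub hDs hb⟩

theorem Nat.odd_choose_add_and_odd_choose_add_iff {s t q D M a b : ℕ} (hsD : 2 ^ s ≤ 2 * D)
    (hDs : D < 2 ^ s) (hst : s ≤ t) (hM : M + D + 1 = 2 ^ t) (hab : a + b = 2 * M) :
    Odd ((2 ^ (t + 1) * q + D + a).choose (2 ^ (t + 1) * q + D)) ∧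
        Odd ((2 ^ (t + 1) * q + D + b).choose (2 ^ (t + 1) * q + D)) ↔
      a ≡ M [MOD 2 ^ s] := by
  have hDt : D < 2 ^ (t + 1) := by rw [pow_succ]; omega
  rw [Nat.odd_choose_two_pow_mul_add_add_iff hDt (by rw [pow_succ]; omega),
    Nat.odd_choose_two_pow_mul_add_add_iff hDt (by rw [pow_succ]; omega)]
  have hMr : M ≡ 2 ^ s - 1 - D [MOD 2 ^ s] := by
    refine Nat.ModEq.add_right_cancel' (D + 1) ?_
    rw [← add_assoc, hM, show 2 ^ s - 1 - D + (D + 1) = 2 ^ s by omega]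
    exact (Nat.modEq_zero_iff_dvd.2 (pow_dvd_pow 2 hst)).trans
      (Nat.modEq_zero_iff_dvd.2 dvd_rfl).symm
  rw [Nat.and_eq_zero_and_and_eq_zero_iff hsD hDs (hab ▸ two_mul M ▸ hMr.add hMr)]
  exact ⟨fun h => h.trans hMr.symm, fun h => h.trans hMr⟩

theorem Int.nonneg_of_odd_choose_toNat_add {N : ℕ} {y : ℤ} (hN : 0 < N)
    (h : Odd (((N : ℤ) + y).toNat.choose N)) : 0 ≤ y := by
  by_contra hy
  rw [Nat.choose_eq_zero_of_lt (show ((N : ℤ) + y).toNat < N by omega)] at h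
  exact Nat.not_odd_zero h

theorem Int.abs_le_sub_of_dvd_of_abs_lt {m n E : ℤ} (hmn : m ∣ n) (hE : m ∣ E) (h : |E| < n) :
    |E| ≤ n - m := by
  have := Int.le_of_dvd (by linarith) (dvd_sub hmn ((dvd_abs m E).2 hE))
  linarith

theorem Int.odd_choose_toNat_add_and_odd_choose_toNat_sub_iff {s t q D M : ℕ}
    (hsD : 2 ^ s ≤ 2 * D) (hDs : D < 2 ^ s) (hst : s ≤ t) (hM : M + D + 1 = 2 ^ t) {E : ℤ}
    (hEM : |E| ≤ M) :
    Odd ((((2 ^ (t + 1) * q + D : ℕ) : ℤ) + (M + E)).toNat.choose (2 ^ (t + 1) * q + D)) ∧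
        Odd ((((2 ^ (t + 1) * q + D : ℕ) : ℤ) + (M - E)).toNat.choose (2 ^ (t + 1) * q + D)) ↔
      (2 ^ s : ℤ) ∣ E := by
  rw [abs_le] at hEM
  obtain ⟨a, ha⟩ := Int.eq_ofNat_of_zero_le (by linarith : 0 ≤ (M : ℤ) + E)
  obtain ⟨b, hb⟩ := Int.eq_ofNat_of_zero_le (by linarith : 0 ≤ (M : ℤ) - E)
  rw [ha, hb, ← Nat.cast_add, ← Nat.cast_add, Int.toNat_natCast, Int.toNat_natCast,
    Nat.odd_choose_add_and_odd_choose_add_iff hsD hDs hst hM (show a + b = 2 * M by omega),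
    Nat.modEq_iff_dvd, show (M : ℤ) - a = -E by omega, dvd_neg]
  push_cast
  rfl

theorem odd_choose_toNat_and_odd_choose_toNat_iff {t s B D : ℕ} (hB : Even B)
    (hsD : 2 ^ s ≤ 2 * D) (hDs : D < 2 ^ s) (hst : s ≤ t) (E : ℤ) :
    Odd (((2 ^ t * (B + 1) : ℤ) + E - 1).toNat.choose (2 ^ t * B + D)) ∧
        Odd (((2 ^ t * (B + 1) : ℤ) - 1 - E).toNat.choose (2 ^ t * B + D)) ↔
      (2 ^ s : ℤ) ∣ E ∧ |E| < 2 ^ t := by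
  obtain ⟨q, rfl⟩ := hB
  have hDt : D < 2 ^ t := hDs.trans_le (Nat.pow_le_pow_right two_pos hst)
  set N := 2 ^ (t + 1) * q + D
  set M := 2 ^ t - 1 - D with hM
  have hMcast : (M : ℤ) = 2 ^ t - 1 - D := by
    have : ((2 ^ t : ℕ) : ℤ) = 2 ^ t := by norm_num
    omega
  have hN : 2 ^ t * (q + q) + D = N := by simp only [N, pow_succ]; ring
  have htop₁ : (2 ^ t * ((q + q : ℕ) + 1) : ℤ) + E - 1 = N + (M + E) := by
    rw [hMcast]; push_cast [N]; ring
  have htop₂ : (2 ^ t * ((q + q : ℕ) + 1) : ℤ) - 1 - E = N + (M - E) := by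
    rw [hMcast]; push_cast [N]; ring
  rw [hN, htop₁, htop₂]
  have key := Int.odd_choose_toNat_add_and_odd_choose_toNat_sub_iff (q := q) (E := E) hsD hDs hst
    (show M + D + 1 = 2 ^ t by omega)
  constructor
  · intro h
    have hNpos : 0 < N := by omega
    have hEM : |E| ≤ M := abs_le.2
      ⟨by linarith [Int.nonneg_of_odd_choose_toNat_add hNpos h.1],
        by linarith [Int.nonneg_of_odd_choose_toNat_add hNpos h.2]⟩
    exact ⟨(key hEM).1 h, by omega⟩
  · rintro ⟨hdvd, hlt⟩
    have hEM : |E| ≤ M := by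
      have := Int.abs_le_sub_of_dvd_of_abs_lt (pow_dvd_pow 2 hst) hdvd hlt
      have : (D : ℤ) < 2 ^ s := by exact_mod_cast hDs
      omega
    exact (key hEM).2 hdvd

theorem P0_odd_iff_general (t B D C ℓ : ℕ)
    (hD : D < 2 ^ t)
    (hBeven : Even B) (hD1 : 1 ≤ D) (hl : ℓ = Nat.log 2 D)
    (j g : ℕ) (E : ℤ) :
    Odd (Nat.choose C j * Nat.choose C g *
        Nat.choose ((2 ^ t * (B + 1) : ℤ) + E - 1).toNat (2 ^ t * B + D) *
        Nat.choose ((2 ^ t * (B + 1) : ℤ) - 1 - E).toNat (2 ^ t * B + D)) ↔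
      (Odd (Nat.choose C j) ∧ Odd (Nat.choose C g) ∧
        ((2 ^ (ℓ + 1) : ℤ) ∣ E) ∧ |E| < 2 ^ t) := by
  have hlog : 2 ^ ℓ ≤ D := hl ▸ Nat.pow_log_le_self 2 (by omega)
  have hDs : D < 2 ^ (ℓ + 1) := hl ▸ Nat.lt_pow_succ_log_self one_lt_two D
  have hsD : 2 ^ (ℓ + 1) ≤ 2 * D := by rw [pow_succ]; omega
  have hst : ℓ + 1 ≤ t := (Nat.pow_lt_pow_iff_right one_lt_two).1 (hlog.trans_lt hD)
  rw [Nat.odd_mul, Nat.odd_mul, Nat.odd_mul, and_assoc, and_assoc,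
    odd_choose_toNat_and_odd_choose_toNat_iff hBeven hsD hDs hst]

/-- With `k = 2^t + k₀` (`1 ≤ k₀ ≤ 2^t`), `n = k + 1 + 2^t·B + D` (`B ≥ 1` even,
`1 ≤ D < 2^t`), `C = k₀ + D − 1`, `ℓ = ⌊log₂ D⌋`, and assuming
`C − 2^⌊log₂ C⌋ < 2^{ℓ+1}`: for `0 ≤ j, g ≤ C`, writing `E = C − j − g ∈ ℤ`, the
product `C(C,j) · C(C,g) · C(2^t(B+1)+E−1, 2^tB+D) · C(2^t(B+1)−1−E, 2^tB+D)`
is odd iff `C(C,j)` and `C(C,g)` are odd, `2^{ℓ+1} ∣ E` and `|E| < 2^t`.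
(The integer tops are converted to `ℕ` via `Int.toNat`; they are positive under
these hypotheses.) -/
theorem P0_odd_iff (n k t k₀ B D C ℓ : ℕ)
    (hk₀ : 1 ≤ k₀) (hk₀' : k₀ ≤ 2 ^ t) (hk : k = 2 ^ t + k₀)
    (hB : 1 ≤ B) (hD : D < 2 ^ t) (hn : n = k + 1 + 2 ^ t * B + D)
    (hC : C = k₀ + D - 1)
    (hBeven : Even B) (hD1 : 1 ≤ D) (hl : ℓ = Nat.log 2 D)
    (hCsmall : C - 2 ^ (Nat.log 2 C) < 2 ^ (ℓ + 1))
    (j g : ℕ) (hj : j ≤ C) (hg : g ≤ C) (E : ℤ) (hE : E = (C : ℤ) - j - g) :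
    Odd (Nat.choose C j * Nat.choose C g *
        Nat.choose ((2 ^ t * (B + 1) : ℤ) + E - 1).toNat (2 ^ t * B + D) *
        Nat.choose ((2 ^ t * (B + 1) : ℤ) - 1 - E).toNat (2 ^ t * B + D)) ↔
      (Odd (Nat.choose C j) ∧ Odd (Nat.choose C g) ∧
        ((2 ^ (ℓ + 1) : ℤ) ∣ E) ∧ |E| < 2 ^ t) :=
  P0_odd_iff_general t B D C ℓ hD hBeven hD1 hl j g E
end

section
/- Assume Notation (t, k₀, B, D, C) with B even and D ≥ 1, set ℓ = ⌊log₂ D⌋, and assume C − 2^{⌊log₂ C⌋} < 2^{ℓ+1}. Let j, g be integers with 0 ≤ j, g ≤ C such that C(C,j) and C(C,g) are odd, 2^{ℓ+1} divides C−j−g, and |C−j−g| < 2^t. Then the binomial coefficient C(2^t(B+1)−C−2, C−j−2g) (interpreted as 0 when C−j−2g < 0) is even, except possibly when (g = 0 and j = C) or when (C = 2^{ℓ+2}−1, t ≥ ℓ+2, and C−j−g = 2^{ℓ+1}). -/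
/-!
Write `C = 2^e + c` with `e = ⌊log₂ C⌋`, so `c < 2^e` and `c < 2^{ℓ+1}`. By Lucas's theorem an odd
`C(C, j)` forces `j mod 2^e ≤ c`, and likewise for `g`. We may assume `C − j − 2g ≥ 0`, so `g < 2^e`.
Stripping the bit `2^e` from those of `C`, `j`, `g` that carry it leaves a number of absolute value
at most `c < 2^{ℓ+1}` (and if `e ≤ ℓ`, already `|C − j − g| < 2^{ℓ+1}`), so the divisibility by
`2^{ℓ+1}` forces `C − j − g = 0` (hence `g = 0`, `j = C`) or `C − j − g = 2^e` with `j + g = c`.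
In the latter case `e < t`, and outside the exceptional case `C + 2 ≤ 2^{e+1}`. Modulo `2^{e+1}`
the upper index `2^t(B+1) − C − 2` is then `2^e − c − 2`, smaller than the lower index `2^e − g`,
so the coefficient is even, again by Lucas.
-/

namespace Nat

theorem mod_pow_le_mod_pow_of_not_dvd_choose {p : ℕ} [hp : Fact p.Prime] (μ : ℕ) {a b : ℕ}
    (h : ¬p ∣ a.choose b) : b % p ^ μ ≤ a % p ^ μ := by
  induction μ generalizing a b with
  | zero => simp [Nat.mod_one]
  | succ μ ih =>
    rw [Choose.choose_modEq_choose_mod_mul_choose_div_nat.dvd_iff dvd_rfl,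
      hp.out.prime.dvd_mul, not_or] at h
    have hlow : b % p ≤ a % p := by
      by_contra hlt
      exact h.1 (by rw [choose_eq_zero_of_lt (not_le.mp hlt)]; exact dvd_zero p)
    rw [pow_succ', mod_mul, mod_mul]
    exact add_le_add hlow (mul_le_mul_left _ (ih h.2))

theorem mod_two_pow_le_of_odd_choose (μ : ℕ) {a b : ℕ} (h : Odd (a.choose b)) :
    b % 2 ^ μ ≤ a % 2 ^ μ :=
  mod_pow_le_mod_pow_of_not_dvd_choose μ h.not_two_dvd_nat

theorem even_choose_of_mod_two_pow_lt {μ a b : ℕ} (h : a % 2 ^ μ < b % 2 ^ μ) :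
    Even (a.choose b) :=
  not_odd_iff_even.mp fun hodd => (mod_two_pow_le_of_odd_choose μ hodd).not_gt h

theorem mod_eq_sub_of_dvd_add {m n x : ℕ} (h : m ∣ n + x) (hx : 0 < x) (hxm : x ≤ m) :
    n % m = m - x := by
  have hdvd : m ∣ n % m + x := by
    rwa [dvd_iff_mod_eq_zero, add_mod, mod_mod, ← add_mod, ← dvd_iff_mod_eq_zero]
  obtain ⟨q, hq⟩ := hdvd
  have hlt := mod_lt n (by omega : 0 < m)
  rcases q with _ | _ | q
  · omega
  · omega
  · nlinarith

end Nat

theorem even_choose_two_pow_mul_sub {t e c g q : ℕ} (het : e < t) (hq : 0 < q) (hgc : g ≤ c)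
    (hc : c + 2 ≤ 2 ^ e) : Even ((2 ^ t * q - (2 ^ e + c + 2)).choose (2 ^ e - g)) := by
  have hpow : 2 ^ (e + 1) = 2 * 2 ^ e := pow_succ' 2 e
  have hle : 2 ^ (e + 1) ≤ 2 ^ t * q :=
    (Nat.pow_le_pow_right two_pos het).trans (Nat.le_mul_of_pos_right _ hq)
  have hdvd : 2 ^ (e + 1) ∣ 2 ^ t * q - (2 ^ e + c + 2) + (2 ^ e + c + 2) := by
    rw [Nat.sub_add_cancel (by omega)]
    exact dvd_mul_of_dvd_left (pow_dvd_pow 2 het) q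
  apply Nat.even_choose_of_mod_two_pow_lt (μ := e + 1)
  rw [Nat.mod_eq_sub_of_dvd_add hdvd (by omega) (by omega), Nat.mod_eq_of_lt (by omega)]
  omega

theorem sub_sub_eq_zero_or_two_pow_add_add_eq {C e m j g : ℕ} (hCe : 2 ^ e ≤ C)
    (hCe' : C < 2 ^ (e + 1)) (hC : C - 2 ^ e < 2 ^ m) (hj : j % 2 ^ e ≤ C % 2 ^ e)
    (hg : g % 2 ^ e ≤ C % 2 ^ e) (hjC : j ≤ C) (hge : g < 2 ^ e)
    (hdvd : (2 ^ m : ℤ) ∣ (C : ℤ) - j - g) :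
    (C : ℤ) - j - g = 0 ∨ 2 ^ e + j + g = C := by
  have hpow : 2 ^ (e + 1) = 2 * 2 ^ e := pow_succ' 2 e
  have hmod {x : ℕ} (hx : 2 ^ e ≤ x) (hx' : x < 2 ^ (e + 1)) : x % 2 ^ e = x - 2 ^ e := by
    rw [Nat.mod_eq_sub_mod hx, Nat.mod_eq_of_lt (by omega)]
  have hzero {x : ℤ} (hx : (2 ^ m : ℤ) ∣ x) (hlo : -(2 ^ m : ℕ) < x) (hhi : x < (2 ^ m : ℕ)) :
      x = 0 :=
    Int.eq_zero_of_abs_lt_dvd hx (abs_lt.mpr ⟨by exact_mod_cast hlo, by exact_mod_cast hhi⟩)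
  rw [hmod hCe hCe', Nat.mod_eq_of_lt hge] at *
  by_cases hje : 2 ^ e ≤ j
  · rw [hmod hje (by omega)] at hj
    exact Or.inl (hzero hdvd (by omega) (by omega))
  rw [Nat.mod_eq_of_lt (not_le.mp hje)] at hj
  rcases le_or_gt m e with hme | hem
  · right
    have hdvd' : (2 ^ m : ℤ) ∣ (C : ℤ) - j - g - (2 ^ e : ℕ) := by
      exact_mod_cast dvd_sub hdvd (pow_dvd_pow (2 : ℤ) hme)
    have := hzero hdvd' (by omega) (by omega)
    omega
  · have : 2 ^ (e + 1) ≤ 2 ^ m := Nat.pow_le_pow_right two_pos hem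
    exact Or.inl (hzero hdvd (by omega) (by omega))

theorem add_two_le_two_pow_succ_or_eq {C e m : ℕ} (hCe : C < 2 ^ (e + 1))
    (hC : C - 2 ^ e < 2 ^ m) (hme : m ≤ e) :
    C + 2 ≤ 2 ^ (e + 1) ∨ (e = m ∧ C = 2 ^ (m + 1) - 1) := by
  have hpow : 2 ^ (e + 1) = 2 * 2 ^ e := pow_succ' 2 e
  by_cases hC2 : C + 2 ≤ 2 ^ (e + 1)
  · exact Or.inl hC2
  have hem : e ≤ m := by
    rw [← Nat.pow_le_pow_iff_right one_lt_two]
    omega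
  obtain rfl := le_antisymm hem hme
  exact Or.inr ⟨rfl, by omega⟩

theorem third_coeff_even_general (t B C ℓ : ℕ)
    (hCsmall : C - 2 ^ (Nat.log 2 C) < 2 ^ (ℓ + 1))
    (j g : ℕ) (hj : j ≤ C)
    (hCj : Odd (Nat.choose C j)) (hCg : Odd (Nat.choose C g))
    (hdvd : (2 ^ (ℓ + 1) : ℤ) ∣ ((C : ℤ) - j - g))
    (habs : |(C : ℤ) - j - g| < 2 ^ t)
    (hexc : ¬((g = 0 ∧ j = C) ∨
      (C = 2 ^ (ℓ + 2) - 1 ∧ ℓ + 2 ≤ t ∧ (C : ℤ) - j - g = 2 ^ (ℓ + 1)))) :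
    Even (if 0 ≤ (C : ℤ) - j - 2 * g then
        Nat.choose (2 ^ t * (B + 1) - C - 2) ((C : ℤ) - j - 2 * g).toNat
      else 0) := by
  by_cases hr : 0 ≤ (C : ℤ) - j - 2 * g
  swap
  · rw [if_neg hr]
    exact Even.zero
  rw [if_pos hr]
  generalize he : Nat.log 2 C = e at hCsmall
  have hC0 : C ≠ 0 := by
    rintro rfl
    exact hexc (Or.inl ⟨by omega, by omega⟩)
  have hCe : 2 ^ e ≤ C := he ▸ Nat.pow_log_le_self 2 hC0
  have hCe' : C < 2 ^ (e + 1) := he ▸ Nat.lt_pow_succ_log_self one_lt_two C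
  have hpow : 2 ^ (e + 1) = 2 * 2 ^ e := pow_succ' 2 e
  rcases sub_sub_eq_zero_or_two_pow_add_add_eq hCe hCe' hCsmall
    (Nat.mod_two_pow_le_of_odd_choose e hCj) (Nat.mod_two_pow_le_of_odd_choose e hCg) hj
    (by omega) hdvd with hS | hS
  · exact absurd (Or.inl ⟨by omega, by omega⟩) hexc
  have hS' : (C : ℤ) - j - g = (2 ^ e : ℕ) := by omega
  have het : e < t := by
    rw [hS', abs_of_nonneg (by positivity)] at habs
    exact (Nat.pow_lt_pow_iff_right one_lt_two).mp (by exact_mod_cast habs)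
  have hle : ℓ + 1 ≤ e := by
    rw [← Nat.pow_dvd_pow_iff_le_right one_lt_two]
    exact_mod_cast hS' ▸ hdvd
  rcases add_two_le_two_pow_succ_or_eq hCe' hCsmall hle with hC2 | ⟨rfl, hCeq⟩
  · rw [show ((C : ℤ) - j - 2 * g).toNat = 2 ^ e - g by omega,
      show 2 ^ t * (B + 1) - C - 2 = 2 ^ t * (B + 1) - (2 ^ e + (C - 2 ^ e) + 2) by omega]
    exact even_choose_two_pow_mul_sub het B.succ_pos (by omega) (by omega)
  · refine absurd (Or.inr ⟨hCeq, het, ?_⟩) hexc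
    rw [hS']
    push_cast
    rfl

/-- With `k = 2^t + k₀` (`1 ≤ k₀ ≤ 2^t`), `n = k + 1 + 2^t·B + D` (`B ≥ 1` even,
`1 ≤ D < 2^t`), `C = k₀ + D − 1`, `ℓ = ⌊log₂ D⌋`, `C − 2^⌊log₂ C⌋ < 2^{ℓ+1}`:
if `0 ≤ j, g ≤ C`, `C(C,j)` and `C(C,g)` are odd, `2^{ℓ+1} ∣ C−j−g` and
`|C−j−g| < 2^t`, then `C(2^t(B+1)−C−2, C−j−2g)` (interpreted as `0` when
`C−j−2g < 0`) is even, except possibly when (`g = 0` and `j = C`) or when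
(`C = 2^{ℓ+2}−1`, `t ≥ ℓ+2` and `C−j−g = 2^{ℓ+1}`). -/
theorem third_coeff_even (n k t k₀ B D C ℓ : ℕ)
    (hk₀ : 1 ≤ k₀) (hk₀' : k₀ ≤ 2 ^ t) (hk : k = 2 ^ t + k₀)
    (hB : 1 ≤ B) (hD : D < 2 ^ t) (hn : n = k + 1 + 2 ^ t * B + D)
    (hC : C = k₀ + D - 1)
    (hBeven : Even B) (hD1 : 1 ≤ D) (hl : ℓ = Nat.log 2 D)
    (hCsmall : C - 2 ^ (Nat.log 2 C) < 2 ^ (ℓ + 1))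
    (j g : ℕ) (hj : j ≤ C) (hg : g ≤ C)
    (hCj : Odd (Nat.choose C j)) (hCg : Odd (Nat.choose C g))
    (hdvd : (2 ^ (ℓ + 1) : ℤ) ∣ ((C : ℤ) - j - g))
    (habs : |(C : ℤ) - j - g| < 2 ^ t)
    (hexc : ¬((g = 0 ∧ j = C) ∨
      (C = 2 ^ (ℓ + 2) - 1 ∧ ℓ + 2 ≤ t ∧ (C : ℤ) - j - g = 2 ^ (ℓ + 1)))) :
    Even (if 0 ≤ (C : ℤ) - j - 2 * g then
        Nat.choose (2 ^ t * (B + 1) - C - 2) ((C : ℤ) - j - 2 * g).toNat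
      else 0) :=
  third_coeff_even_general t B C ℓ hCsmall j g hj hCj hCg hdvd habs hexc
end

section
/- Assume Notation (t, k₀, B, D, C) with B even and D ≥ 1, set ℓ = ⌊log₂ D⌋, and assume C − 2^{⌊log₂ C⌋} < 2^{ℓ+1}. Let j, g be integers with 0 ≤ j, g ≤ C such that C(C,j) and C(C,g) are odd, 2^{ℓ+1} divides C−j−g, and |C−j−g| < 2^t. Then the binomial coefficient C(2^t(B+1)−C−2, 2^t(B+1)+C−1−j−2g) (interpreted as 0 when the lower entry is negative or exceeds the upper entry) is even, except possibly when C = 2^{ℓ+2}−1, t ≥ ℓ+2, and C−j−g = −2^{ℓ+1}. -/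
/-!
By Lucas' theorem `j` and `g` are binary submasks of `C`. If `j + g ≤ C` the lower entry exceeds
the upper one. Otherwise write `C = 2^c + s` with `c = ⌊log₂ C⌋`, so `s < 2^{ℓ+1}`. Since
`2^{ℓ+1} ≤ j + g - C`, both `j` and `g` contain the top bit: `j = 2^c + j'`, `g = 2^c + g'` with
`j', g'` submasks of `s`, and the divisibility forces `j' + g' = s`, i.e. `C - j - g = -2^c`.
The binomial coefficient is then `C(r + u, r)` where, below bit `c`, the bits of `r` are those of
the complement of `g'` and the bits of `u` those of the complement of `j'`. Unless
`s = 2^c - 1`, which is the excluded case, `s` has a zero bit below `c`; it is zero in `j'` and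
`g'`, hence set in both `r` and `u`, and by Kummer's theorem the coefficient is even.
-/

namespace Nat

theorem even_choose_of_two_pow_le_mod_add_mod {n k m : ℕ} (hkn : k ≤ n) (hm : m ≠ 0)
    (hcarry : 2 ^ m ≤ k % 2 ^ m + (n - k) % 2 ^ m) : Even (n.choose k) := by
  have : Fact (Nat.Prime 2) := ⟨Nat.prime_two⟩
  have hmn : m < log 2 n + 1 := by
    have := Nat.mod_le k (2 ^ m)
    have := Nat.mod_le (n - k) (2 ^ m)
    exact Nat.lt_succ_of_le (Nat.le_log_of_pow_le one_lt_two (by omega))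
  refine even_iff_two_dvd.mpr (dvd_of_one_le_padicValNat ?_)
  rw [padicValNat_choose (b := log 2 n + 1) hkn (Nat.lt_succ_self _)]
  exact Finset.card_pos.mpr ⟨m, Finset.mem_filter.mpr
    ⟨Finset.mem_Ico.mpr ⟨Nat.one_le_iff_ne_zero.mpr hm, hmn⟩, hcarry⟩⟩

theorem two_pow_le_mod_two_pow_succ_of_testBit {a i : ℕ} (h : a.testBit i = true) :
    2 ^ i ≤ a % 2 ^ (i + 1) :=
  ge_two_pow_of_testBit (by simpa [testBit_mod_two_pow] using h)

theorem mod_two_pow_succ_lt_of_testBit_eq_false {a i : ℕ} (h : a.testBit i = false) :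
    a % 2 ^ (i + 1) < 2 ^ i := by
  refine lt_pow_two_of_testBit _ fun j hj => ?_
  rcases hj.eq_or_lt with rfl | hj
  · simpa [testBit_mod_two_pow] using h
  · simp [testBit_mod_two_pow, show ¬ j < i + 1 by omega]

/-- Kummer's theorem at `p = 2`: a common bit of `a` and `b` produces a carry in `a + b`. -/
theorem even_choose_add_of_testBit {a b i : ℕ} (ha : a.testBit i = true)
    (hb : b.testBit i = true) : Even ((a + b).choose a) := by
  refine even_choose_of_two_pow_le_mod_add_mod (m := i + 1) (le_add_right a b)
    i.add_one_ne_zero ?_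
  have := two_pow_le_mod_two_pow_succ_of_testBit ha
  have := two_pow_le_mod_two_pow_succ_of_testBit hb
  rw [Nat.add_sub_cancel_left]
  have := pow_succ 2 i
  omega

def IsSubmask (a b : ℕ) : Prop := ∀ i, a.testBit i = true → b.testBit i = true

theorem IsSubmask.le {a b : ℕ} (h : a.IsSubmask b) : a ≤ b := le_of_testBit h

theorem IsSubmask.mod_two_pow {a b : ℕ} (h : a.IsSubmask b) (c : ℕ) :
    (a % 2 ^ c).IsSubmask (b % 2 ^ c) := fun i hi => by
  simp only [testBit_mod_two_pow, Bool.and_eq_true] at hi ⊢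
  exact ⟨hi.1, h i hi.2⟩

theorem IsSubmask.testBit_eq_false {a b i : ℕ} (h : a.IsSubmask b) (hb : b.testBit i = false) :
    a.testBit i = false :=
  Bool.eq_false_iff.mpr fun ha => by simp [h i ha] at hb

theorem isSubmask_of_odd_choose {n k : ℕ} (h : Odd (n.choose k)) : k.IsSubmask n := by
  have hkn : k ≤ n := by
    by_contra hlt
    rw [choose_eq_zero_of_lt (by omega)] at h
    exact absurd h (by decide)
  intro i hk
  by_contra hn
  refine not_even_iff_odd.mpr h
    (even_choose_of_two_pow_le_mod_add_mod (m := i + 1) hkn i.add_one_ne_zero ?_)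
  have hsum := Nat.add_mod k (n - k) (2 ^ (i + 1))
  rw [Nat.add_sub_cancel' hkn] at hsum
  have := two_pow_le_mod_two_pow_succ_of_testBit hk
  have := mod_two_pow_succ_lt_of_testBit_eq_false (eq_false_of_ne_true hn)
  by_contra hlt
  rw [Nat.mod_eq_of_lt (not_le.mp hlt)] at hsum
  omega

theorem IsSubmask.exists_eq_two_pow_add {j C c : ℕ} (h : j.IsSubmask C) (hC₁ : 2 ^ c ≤ C)
    (hC₂ : C < 2 ^ (c + 1)) (hlt : C - 2 ^ c < j) :
    ∃ j', j = 2 ^ c + j' ∧ j'.IsSubmask (C - 2 ^ c) := by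
  have hCc : C % 2 ^ c = C - 2 ^ c := by
    rw [Nat.mod_eq_sub_mod hC₁, Nat.mod_eq_of_lt (by rw [pow_succ] at hC₂; omega)]
  refine ⟨j % 2 ^ c, ?_, hCc ▸ h.mod_two_pow c⟩
  have hjC := h.le
  have hmod := (h.mod_two_pow c).le
  have hdiv := Nat.div_add_mod j (2 ^ c)
  have hq : j / 2 ^ c < 2 := Nat.div_lt_of_lt_mul (by rw [← pow_succ]; omega)
  generalize j / 2 ^ c = q at hq hdiv
  interval_cases q <;> omega

theorem exists_testBit_eq_false_of_lt_two_pow_sub_one {s c : ℕ} (h : s < 2 ^ c - 1) :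
    ∃ i < c, s.testBit i = false := by
  by_contra! hall
  refine h.not_ge (le_of_testBit fun i hi => ?_)
  rw [testBit_two_pow_sub_one, decide_eq_true_eq] at hi
  simpa using hall i hi

theorem even_choose_of_testBit_eq_false {q a b c i : ℕ} (ha : a < 2 ^ c) (hb : b < 2 ^ c)
    (hi : i < c) (hai : a.testBit i = false) (hbi : b.testBit i = false) :
    Even ((2 ^ (c + 1) * q + (2 ^ (c + 1) - (b + 1)) + (2 ^ c - (a + 1))).choose
      (2 ^ (c + 1) * q + (2 ^ (c + 1) - (b + 1)))) := by
  have hb' : b < 2 ^ (c + 1) := hb.trans (Nat.pow_lt_pow_succ one_lt_two)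
  refine even_choose_add_of_testBit (i := i) ?_ ?_
  · rw [testBit_two_pow_mul_add _ (Nat.sub_lt (Nat.two_pow_pos _) b.succ_pos),
      if_pos (by omega), testBit_two_pow_sub_succ hb']
    simp [hbi, show i < c + 1 by omega]
  · rw [testBit_two_pow_sub_succ ha]
    simp [hai, hi]

end Nat

def intChoose (n : ℕ) (m : ℤ) : ℕ := if 0 ≤ m then n.choose m.toNat else 0

theorem intChoose_natCast (n m : ℕ) : intChoose n m = n.choose m := by
  simp [intChoose]

theorem intChoose_eq_zero_of_lt {n : ℕ} {m : ℤ} (h : (n : ℤ) < m) : intChoose n m = 0 := by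
  unfold intChoose
  split_ifs
  · exact Nat.choose_eq_zero_of_lt (by omega)
  · rfl

theorem exists_eq_two_pow_add_of_odd_choose {C ℓ j g : ℕ}
    (hCsmall : C - 2 ^ (Nat.log 2 C) < 2 ^ (ℓ + 1))
    (hCj : Odd (C.choose j)) (hCg : Odd (C.choose g))
    (hdvd : (2 ^ (ℓ + 1) : ℤ) ∣ ((C : ℤ) - j - g)) (hlt : C < j + g) :
    ∃ c j' g', ℓ + 1 ≤ c ∧ C = 2 ^ c + (j' + g') ∧ j' + g' < 2 ^ (ℓ + 1) ∧
      j = 2 ^ c + j' ∧ g = 2 ^ c + g' ∧ j'.IsSubmask (j' + g') ∧ g'.IsSubmask (j' + g') := by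
  have hj := Nat.isSubmask_of_odd_choose hCj
  have hg := Nat.isSubmask_of_odd_choose hCg
  have hjC := hj.le
  have hgC := hg.le
  have he : 2 ^ (ℓ + 1) ≤ j + g - C := by
    refine Nat.le_of_dvd (by omega) (Int.natCast_dvd_natCast.mp ?_)
    rw [show ((j + g - C : ℕ) : ℤ) = -((C : ℤ) - j - g) by push_cast [Nat.cast_sub hlt.le]; ring]
    exact_mod_cast hdvd.neg_right
  set c := Nat.log 2 C
  have hc₁ : 2 ^ c ≤ C := Nat.pow_log_le_self 2 (by omega)
  have hc₂ : C < 2 ^ (c + 1) := Nat.lt_pow_succ_log_self one_lt_two C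
  obtain ⟨j', rfl, hj'⟩ := hj.exists_eq_two_pow_add hc₁ hc₂ (by omega)
  obtain ⟨g', rfl, hg'⟩ := hg.exists_eq_two_pow_add hc₁ hc₂ (by omega)
  clear_value c
  obtain ⟨s, rfl⟩ : ∃ s, C = 2 ^ c + s := ⟨C - 2 ^ c, by omega⟩
  rw [Nat.add_sub_cancel_left] at hCsmall hj' hg'
  have hj's := hj'.le
  have hg's := hg'.le
  have hℓc : ℓ + 1 ≤ c := Nat.lt_succ_iff.mp
    ((Nat.pow_lt_pow_iff_right one_lt_two).mp (by rw [pow_succ] at hc₂ ⊢; omega))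
  have hsum : j' + g' = s := by
    have hdvd' : (2 ^ (ℓ + 1) : ℤ) ∣ (j' + g' - s : ℤ) := by
      push_cast at hdvd
      rw [show (j' + g' - s : ℤ) = -(2 ^ c + s - (2 ^ c + j') - (2 ^ c + g')) - 2 ^ c by ring]
      exact dvd_sub hdvd.neg_right (pow_dvd_pow 2 hℓc)
    have := Int.eq_zero_of_abs_lt_dvd hdvd' (by zify at hCsmall hj's hg's; rw [abs_lt]; omega)
    omega
  subst hsum
  exact ⟨c, j', g', hℓc, rfl, hCsmall, rfl, rfl, hj', hg'⟩

theorem exists_two_pow_mul_add_eq {t c B : ℕ} (hct : c < t) (hB : 1 ≤ B) :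
    ∃ q, 2 ^ t * (B + 1) = 2 ^ (c + 1) * q + 4 * 2 ^ c := by
  obtain ⟨d, rfl⟩ := Nat.exists_eq_add_of_lt hct
  obtain ⟨q, hq⟩ : ∃ q, 2 ^ d * (B + 1) = q + 2 :=
    ⟨_, (Nat.sub_add_cancel (le_mul_of_one_le_of_le Nat.one_le_two_pow (by omega))).symm⟩
  refine ⟨q, ?_⟩
  rw [add_right_comm, pow_add, mul_assoc, hq]
  ring

theorem even_intChoose_of_lt_two_pow_sub_one {c q j' g' : ℕ} (hs : j' + g' < 2 ^ c - 1)
    (hj' : j'.IsSubmask (j' + g')) (hg' : g'.IsSubmask (j' + g')) :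
    Even (intChoose (2 ^ (c + 1) * q + 4 * 2 ^ c - (2 ^ c + (j' + g')) - 2)
      (((2 ^ (c + 1) * q + 4 * 2 ^ c : ℕ) : ℤ) + (2 ^ c + (j' + g') : ℕ) - 1 - (2 ^ c + j' : ℕ) -
        2 * (2 ^ c + g' : ℕ))) := by
  obtain ⟨i, hic, hi⟩ := Nat.exists_testBit_eq_false_of_lt_two_pow_sub_one hs
  have hg'c : g' + 1 ≤ 2 ^ (c + 1) := by rw [pow_succ]; omega
  have hlower : ((2 ^ (c + 1) * q + 4 * 2 ^ c : ℕ) : ℤ) + (2 ^ c + (j' + g') : ℕ) - 1 -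
      (2 ^ c + j' : ℕ) - 2 * (2 ^ c + g' : ℕ) =
      ((2 ^ (c + 1) * q + (2 ^ (c + 1) - (g' + 1)) : ℕ) : ℤ) := by
    push_cast [Nat.cast_sub hg'c]; ring
  have hupper : 2 ^ (c + 1) * q + 4 * 2 ^ c - (2 ^ c + (j' + g')) - 2 =
      2 ^ (c + 1) * q + (2 ^ (c + 1) - (g' + 1)) + (2 ^ c - (j' + 1)) := by
    rw [pow_succ]; omega
  rw [hlower, intChoose_natCast, hupper]
  exact Nat.even_choose_of_testBit_eq_false (by omega) (by omega) hic
    (hj'.testBit_eq_false hi) (hg'.testBit_eq_false hi)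

theorem middle_coeff_even_general (t k₀ B D C ℓ : ℕ)
    (hk₀' : k₀ ≤ 2 ^ t)
    (hB : 1 ≤ B) (hD : D < 2 ^ t)
    (hC : C = k₀ + D - 1)
    (hCsmall : C - 2 ^ (Nat.log 2 C) < 2 ^ (ℓ + 1))
    (j g : ℕ)
    (hCj : Odd (Nat.choose C j)) (hCg : Odd (Nat.choose C g))
    (hdvd : (2 ^ (ℓ + 1) : ℤ) ∣ ((C : ℤ) - j - g))
    (habs : |(C : ℤ) - j - g| < 2 ^ t)
    (hexc : ¬(C = 2 ^ (ℓ + 2) - 1 ∧ ℓ + 2 ≤ t ∧ (C : ℤ) - j - g = -2 ^ (ℓ + 1))) :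
    Even (if 0 ≤ (2 ^ t * (B + 1) : ℤ) + C - 1 - j - 2 * g then
        Nat.choose (2 ^ t * (B + 1) - C - 2)
          ((2 ^ t * (B + 1) : ℤ) + C - 1 - j - 2 * g).toNat
      else 0) := by
  rw [show (2 ^ t * (B + 1) : ℤ) = ((2 ^ t * (B + 1) : ℕ) : ℤ) by push_cast; ring]
  change Even (intChoose _ _)
  by_cases hjg : j + g ≤ C
  · have := Nat.mul_le_mul_left (2 ^ t) (show 2 ≤ B + 1 by omega)
    rw [intChoose_eq_zero_of_lt (by omega)]
    exact Even.zero
  obtain ⟨c, j', g', hℓc, rfl, hs, rfl, rfl, hj', hg'⟩ :=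
    exists_eq_two_pow_add_of_odd_choose hCsmall hCj hCg hdvd (by omega)
  have hgap : ((2 ^ c + (j' + g') : ℕ) : ℤ) - (2 ^ c + j' : ℕ) - (2 ^ c + g' : ℕ) = -2 ^ c := by
    push_cast; ring
  rw [hgap, abs_neg, abs_of_pos (by positivity)] at habs
  have hct : c < t := (pow_lt_pow_iff_right₀ (by norm_num)).mp habs
  have hs' : j' + g' < 2 ^ c - 1 := by
    by_contra! hge
    obtain rfl : c = ℓ + 1 :=
      le_antisymm ((Nat.pow_le_pow_iff_right one_lt_two).mp (by omega)) hℓc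
    exact hexc ⟨by rw [pow_succ 2 (ℓ + 1)]; omega, by omega, hgap⟩
  obtain ⟨q, hq⟩ := exists_two_pow_mul_add_eq hct hB
  rw [hq]
  exact even_intChoose_of_lt_two_pow_sub_one hs' hj' hg'

/-- With `k = 2^t + k₀` (`1 ≤ k₀ ≤ 2^t`), `n = k + 1 + 2^t·B + D` (`B ≥ 1` even,
`1 ≤ D < 2^t`), `C = k₀ + D − 1`, `ℓ = ⌊log₂ D⌋`, `C − 2^⌊log₂ C⌋ < 2^{ℓ+1}`:
if `0 ≤ j, g ≤ C`, `C(C,j)` and `C(C,g)` are odd, `2^{ℓ+1} ∣ C−j−g` and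
`|C−j−g| < 2^t`, then `C(2^t(B+1)−C−2, 2^t(B+1)+C−1−j−2g)` (interpreted as `0`
when the lower entry is negative or exceeds the upper entry) is even, except
possibly when `C = 2^{ℓ+2}−1`, `t ≥ ℓ+2` and `C−j−g = −2^{ℓ+1}`. -/
theorem middle_coeff_even (n k t k₀ B D C ℓ : ℕ)
    (hk₀ : 1 ≤ k₀) (hk₀' : k₀ ≤ 2 ^ t) (hk : k = 2 ^ t + k₀)
    (hB : 1 ≤ B) (hD : D < 2 ^ t) (hn : n = k + 1 + 2 ^ t * B + D)
    (hC : C = k₀ + D - 1)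
    (hBeven : Even B) (hD1 : 1 ≤ D) (hl : ℓ = Nat.log 2 D)
    (hCsmall : C - 2 ^ (Nat.log 2 C) < 2 ^ (ℓ + 1))
    (j g : ℕ) (hj : j ≤ C) (hg : g ≤ C)
    (hCj : Odd (Nat.choose C j)) (hCg : Odd (Nat.choose C g))
    (hdvd : (2 ^ (ℓ + 1) : ℤ) ∣ ((C : ℤ) - j - g))
    (habs : |(C : ℤ) - j - g| < 2 ^ t)
    (hexc : ¬(C = 2 ^ (ℓ + 2) - 1 ∧ ℓ + 2 ≤ t ∧ (C : ℤ) - j - g = -2 ^ (ℓ + 1))) :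
    Even (if 0 ≤ (2 ^ t * (B + 1) : ℤ) + C - 1 - j - 2 * g then
        Nat.choose (2 ^ t * (B + 1) - C - 2)
          ((2 ^ t * (B + 1) : ℤ) + C - 1 - j - 2 * g).toNat
      else 0) :=
  middle_coeff_even_general t k₀ B D C ℓ hk₀' hB hD hC hCsmall j g hCj hCg hdvd habs hexc
end

section
/- Let n > 2k ≥ 4 and let B_{n,k} = F₂[R, V₁, …, V_{n−1}]/J_{n,k}, where J_{n,k} is the ideal generated by V_i² + V_i·R (1 ≤ i ≤ n−1) and by ∏_{i∈S} V_i for all S ⊆ {1,…,n−1} with |S| = k. For L ⊆ {1,…,n−1} and an integer d ≥ k−1, define r_{L,d} = ∑_{S⊆L, |S|≤k−1} R^{d−|S|}·∏_{i∈S} V_i ∈ B_{n,k}. Then for every L ⊆ {1,…,n−1} with |L| ≥ k and every ℓ ∈ {1,…,n−1}: (a) if ℓ ∉ L, then V_ℓ · r_{L,|L|−1} = r_{L∪{ℓ},|L|} + r_{L,|L|} in B_{n,k}; (b) if ℓ ∈ L, then V_ℓ · r_{L,|L|−1} = 0 in B_{n,k}. -/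
/-!
Write `F(L, d) = ∑_{S ⊆ L} R^{d-|S|} ∏_{i∈S} V_i`. Every monomial with `|S| ≥ k` vanishes in
`B_{n,k}`, so `r_{L,d} = F(L, d)` and the truncation `|S| ≤ k - 1` can be forgotten. Splitting the
subsets of `L ∪ {ℓ}` according to whether they contain `ℓ` gives
`F(L ∪ {ℓ}, d) = F(L, d) + V_ℓ F(L, d - 1)`, which is (a) in characteristic 2. For (b), write
`L = L' ∪ {ℓ}`; using `V_ℓ² = V_ℓ R`, `V_ℓ F(L, |L| - 1) = V_ℓ F(L', |L'|) + V_ℓ R F(L', |L'| - 1)`,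
and the two summands agree: termwise the powers of `R` match except for `S = L'`, where the
monomial `V_ℓ ∏_{L'} V_i = ∏_L V_i` vanishes because `|L| ≥ k`.
-/

open MvPolynomial

noncomputable section

/-- The relations defining `B_{n,k}`: in `F₂[R, V₁, …, V_{n−1}]`, realized as
`MvPolynomial (Option (Fin (n-1))) (ZMod 2)` with `X none = R` and
`X (some j) = V_{j+1}`, take `V_i² + V_i·R` for all `i`, and `∏_{i∈S} V_i`
for all `S` with `|S| = k`. -/
def linkRels (n k : ℕ) : Set (MvPolynomial (Option (Fin (n - 1))) (ZMod 2)) :=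
  (Set.range fun i : Fin (n - 1) => X (some i) ^ 2 + X (some i) * X none) ∪
  ((fun S : Finset (Fin (n - 1)) => ∏ i ∈ S, X (some i)) '' {S | S.card = k})

/-- The algebra `B_{n,k} = F₂[R, V₁, …, V_{n−1}]/J_{n,k}`. -/
abbrev LinkAlg (n k : ℕ) :=
  MvPolynomial (Option (Fin (n - 1))) (ZMod 2) ⧸ Ideal.span (linkRels n k)

/-- The element `r_{L,d} = ∑_{S⊆L, |S|≤k−1} R^{d−|S|}·∏_{i∈S} V_i` of `B_{n,k}`. -/
def rEl (n k : ℕ) (L : Finset (Fin (n - 1))) (d : ℕ) : LinkAlg n k :=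
  Ideal.Quotient.mk _
    (∑ S ∈ L.powerset.filter (fun S => S.card ≤ k - 1),
      X none ^ (d - S.card) * ∏ i ∈ S, X (some i))

open Finset

section RelSum

variable {A ι : Type*} [CommRing A] (r : A) (v : ι → A)

/-- The untruncated version `∑_{S ⊆ L} r^{d-|S|} ∏_{i∈S} v_i` of `r_{L,d}`. -/
def relSum (L : Finset ι) (d : ℕ) : A :=
  ∑ S ∈ L.powerset, r ^ (d - S.card) * ∏ i ∈ S, v i

variable {r v} {k : ℕ}

theorem prod_eq_zero_of_le_card (hv : ∀ S : Finset ι, S.card = k → ∏ i ∈ S, v i = 0)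
    {S : Finset ι} (hS : k ≤ S.card) : ∏ i ∈ S, v i = 0 := by
  classical
  obtain ⟨T, hTS, hT⟩ := exists_subset_card_eq hS
  rw [← prod_sdiff hTS, hv T hT, mul_zero]

theorem sum_powerset_card_le_eq_relSum (hv : ∀ S : Finset ι, S.card = k → ∏ i ∈ S, v i = 0)
    (L : Finset ι) (d : ℕ) :
    ∑ S ∈ L.powerset.filter (fun S => S.card ≤ k - 1), r ^ (d - S.card) * ∏ i ∈ S, v i =
      relSum r v L d := by
  refine sum_filter_of_ne fun S _ hS => ?_
  by_contra hk
  exact hS (by rw [prod_eq_zero_of_le_card hv (by omega), mul_zero])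

variable [DecidableEq ι]

theorem relSum_insert {l : ι} {L : Finset ι} (hl : l ∉ L) (d : ℕ) :
    relSum r v (insert l L) d = relSum r v L d + v l * relSum r v L (d - 1) := by
  rw [relSum, sum_powerset_insert hl, relSum, relSum, mul_sum]
  congr 1
  refine sum_congr rfl fun S hS => ?_
  have hlS : l ∉ S := fun h => hl (mem_powerset.1 hS h)
  rw [card_insert_of_notMem hlS, prod_insert hlS, show d - (S.card + 1) = d - 1 - S.card by omega]
  ring

theorem mul_r_mul_relSum (hv : ∀ S : Finset ι, S.card = k → ∏ i ∈ S, v i = 0)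
    {l : ι} {L : Finset ι} (hl : l ∉ L) (hL : k ≤ L.card + 1) :
    v l * (r * relSum r v L (L.card - 1)) = v l * relSum r v L L.card := by
  simp only [relSum, mul_sum]
  refine sum_congr rfl fun S hS => ?_
  have hSL : S ⊆ L := mem_powerset.1 hS
  have hlS : l ∉ S := fun h => hl (hSL h)
  by_cases hkS : k ≤ S.card + 1
  · have hzero : v l * ∏ i ∈ S, v i = 0 := by
      rw [← prod_insert hlS]
      exact prod_eq_zero_of_le_card hv (by rwa [card_insert_of_notMem hlS])
    linear_combination (r * r ^ (L.card - 1 - S.card) - r ^ (L.card - S.card)) * hzero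
  · rw [show L.card - S.card = L.card - 1 - S.card + 1 by omega, pow_succ]
    ring

theorem mul_relSum_card_sub_one_of_notMem (h2 : (2 : A) = 0) {l : ι} {L : Finset ι}
    (hl : l ∉ L) :
    v l * relSum r v L (L.card - 1) = relSum r v (insert l L) L.card + relSum r v L L.card := by
  linear_combination -relSum_insert (r := r) (v := v) hl L.card - relSum r v L L.card * h2

theorem mul_relSum_card_sub_one_of_mem (h2 : (2 : A) = 0) (hsq : ∀ i, v i * v i = v i * r)
    (hv : ∀ S : Finset ι, S.card = k → ∏ i ∈ S, v i = 0)
    {l : ι} {L : Finset ι} (hl : l ∈ L) (hL : k ≤ L.card) :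
    v l * relSum r v L (L.card - 1) = 0 := by
  obtain ⟨L', hlL', rfl⟩ : ∃ L', l ∉ L' ∧ L = insert l L' :=
    ⟨L.erase l, notMem_erase l L, (insert_erase hl).symm⟩
  rw [card_insert_of_notMem hlL'] at hL ⊢
  have hshift := mul_r_mul_relSum (r := r) hv hlL' hL
  rw [Nat.add_sub_cancel, relSum_insert hlL']
  linear_combination relSum r v L' (L'.card - 1) * hsq l + hshift
    + v l * relSum r v L' L'.card * h2

end RelSum

namespace LinkAlg

variable (n k : ℕ)

abbrev R : LinkAlg n k := Ideal.Quotient.mk _ (X none)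

abbrev V (i : Fin (n - 1)) : LinkAlg n k := Ideal.Quotient.mk _ (X (some i))

variable {n k}

theorem two_eq_zero : (2 : LinkAlg n k) = 0 := by
  rw [← map_ofNat (algebraMap (ZMod 2) (LinkAlg n k)) 2,
    show (OfNat.ofNat 2 : ZMod 2) = 0 from rfl, map_zero]

theorem V_mul_V (i : Fin (n - 1)) : V n k i * V n k i = V n k i * R n k := by
  have h : Ideal.Quotient.mk (Ideal.span (linkRels n k))
      (X (some i) ^ 2 + X (some i) * X none) = 0 :=
    Ideal.Quotient.eq_zero_iff_mem.2 (Ideal.subset_span (Or.inl ⟨i, rfl⟩))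
  rw [map_add, map_mul, map_pow] at h
  linear_combination h - V n k i * R n k * two_eq_zero

theorem prod_V_eq_zero (S : Finset (Fin (n - 1))) (hS : S.card = k) : ∏ i ∈ S, V n k i = 0 := by
  rw [← map_prod]
  exact Ideal.Quotient.eq_zero_iff_mem.2 (Ideal.subset_span (Or.inr ⟨S, hS, rfl⟩))

theorem rEl_eq_relSum (L : Finset (Fin (n - 1))) (d : ℕ) :
    rEl n k L d = relSum (R n k) (V n k) L d := by
  rw [rEl, map_sum, ← sum_powerset_card_le_eq_relSum prod_V_eq_zero]
  simp only [map_mul, map_pow, map_prod]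

end LinkAlg

theorem mul_rEl_general (n k : ℕ)
    (L : Finset (Fin (n - 1))) (hL : k ≤ L.card) (l : Fin (n - 1)) :
    (l ∉ L → Ideal.Quotient.mk (Ideal.span (linkRels n k)) (X (some l)) *
        rEl n k L (L.card - 1) =
      rEl n k (insert l L) L.card + rEl n k L L.card) ∧
    (l ∈ L → Ideal.Quotient.mk (Ideal.span (linkRels n k)) (X (some l)) *
        rEl n k L (L.card - 1) = 0) := by
  simp only [LinkAlg.rEl_eq_relSum]
  exact ⟨mul_relSum_card_sub_one_of_notMem LinkAlg.two_eq_zero,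
    fun hl => mul_relSum_card_sub_one_of_mem LinkAlg.two_eq_zero LinkAlg.V_mul_V
      LinkAlg.prod_V_eq_zero hl hL⟩

/-- For `n > 2k ≥ 4`, `L ⊆ {1,…,n−1}` with `|L| ≥ k` and any `ℓ`:
(a) if `ℓ ∉ L` then `V_ℓ · r_{L,|L|−1} = r_{L∪{ℓ},|L|} + r_{L,|L|}` in `B_{n,k}`;
(b) if `ℓ ∈ L` then `V_ℓ · r_{L,|L|−1} = 0` in `B_{n,k}`.
Here the index `l : Fin (n-1)` corresponds to `V_{l+1}`, i.e. `X (some l)`. -/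
theorem mul_rEl (n k : ℕ) (hk : 2 ≤ k) (hnk : 2 * k < n)
    (L : Finset (Fin (n - 1))) (hL : k ≤ L.card) (l : Fin (n - 1)) :
    (l ∉ L → Ideal.Quotient.mk (Ideal.span (linkRels n k)) (X (some l)) *
        rEl n k L (L.card - 1) =
      rEl n k (insert l L) L.card + rEl n k L L.card) ∧
    (l ∈ L → Ideal.Quotient.mk (Ideal.span (linkRels n k)) (X (some l)) *
        rEl n k L (L.card - 1) = 0) :=
  mul_rEl_general n k L hL l

end
end
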